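/- arXiv:2012.11054 — 8 statements merged into one kernel-verified Lean document; each statement's English description precedes it below -/
import Mathlib

section
/- Let T be a conformal Killing-Yano (CKY) tensor on a metric Lie algebra (g, ⟨·,·⟩) with associated 1-form θ and dual vector ξ (i.e., θ(x) = ⟨ξ, x⟩). Then T ξ = 0. -/
open scoped RealInnerProductSpace

/-!
Taking `x = y` and `z = T x` in the CKY equation, the metric property of `∇` and the skewness of
`T` reduce it to `|x|² θ(T x) = ⟨[T² x, x], x⟩`. Since `T²` is symmetric it has an orthonormal
eigenbasis, and for an eigenvector `x` the bracket `[T² x, x]` is a multiple of `[x, x] = 0`.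
Hence `⟨T ξ, x⟩ = -θ(T x)` vanishes on a basis.
-/

section

variable {V : Type*} [NormedAddCommGroup V] [InnerProductSpace ℝ V]

/-- `D u v` stands for `∇_u v`, and `ξ` is the dual vector of the 1-form `θ`. -/
def IsConformalKillingYano (D : V →ₗ[ℝ] V →ₗ[ℝ] V) (T : V →ₗ[ℝ] V) (ξ : V) : Prop :=
  ∀ u v w : V,
    ⟪D u (T v) - T (D u v), w⟫ + ⟪D v (T u) - T (D v u), w⟫
      = 2 * ⟪u, v⟫ * ⟪ξ, w⟫ - ⟪v, w⟫ * ⟪ξ, u⟫ - ⟪u, w⟫ * ⟪ξ, v⟫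

section Skew

variable {T : V →ₗ[ℝ] V} (hT : ∀ u v : V, ⟪T u, v⟫ = -⟪u, T v⟫)
include hT

theorem inner_self_apply_eq_zero_of_skew (x : V) : ⟪x, T x⟫ = 0 := by
  have := hT x x
  rw [real_inner_comm] at this
  linarith

theorem isSymmetric_comp_self_of_skew : (T ∘ₗ T).IsSymmetric := fun u v => by
  rw [LinearMap.comp_apply, LinearMap.comp_apply, hT, hT, neg_neg]

end Skew

section Koszul

variable {lb D : V →ₗ[ℝ] V →ₗ[ℝ] V} (hanti : lb.IsAlt)
  (hD : ∀ u v w : V, 2 * ⟪D u v, w⟫ = ⟪lb u v, w⟫ - ⟪lb v w, u⟫ + ⟪lb w u, v⟫)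
include hanti hD

theorem koszul_inner_self_right (u v : V) : ⟪D u v, v⟫ = 0 := by
  have h := hD u v v
  rw [hanti v, ← hanti.neg u v, inner_zero_left, inner_neg_left] at h
  linarith

theorem koszul_inner_diag (u w : V) : ⟪D u u, w⟫ = ⟪lb w u, u⟫ := by
  have h := hD u u w
  rw [hanti u, ← hanti.neg w u, inner_zero_left, inner_neg_left] at h
  linarith

variable {T : V →ₗ[ℝ] V} (hT : ∀ u v : V, ⟪T u, v⟫ = -⟪u, T v⟫) {ξ : V}
  (hCKY : IsConformalKillingYano D T ξ)
include hT hCKY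

theorem inner_self_mul_inner_dual_apply (x : V) :
    ⟪x, x⟫ * ⟪ξ, T x⟫ = ⟪lb (T (T x)) x, x⟫ := by
  have h := hCKY x x (T x)
  rw [inner_sub_left, koszul_inner_self_right hanti hD, hT, koszul_inner_diag hanti hD,
    inner_self_apply_eq_zero_of_skew hT] at h
  linarith

theorem inner_dual_apply_eq_zero_of_apply_apply_eq_smul {x : V} (hx₀ : x ≠ 0) {μ : ℝ}
    (hx : T (T x) = μ • x) : ⟪ξ, T x⟫ = 0 := by
  have h := inner_self_mul_inner_dual_apply hanti hD hT hCKY x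
  rw [hx, map_smul, LinearMap.smul_apply, hanti x, smul_zero, inner_zero_left] at h
  exact (mul_eq_zero.mp h).resolve_left (inner_self_ne_zero.mpr hx₀)

end Koszul

end

theorem cky_tensor_vanishes_on_dual_vector_general
    {V : Type*} [NormedAddCommGroup V] [InnerProductSpace ℝ V] [FiniteDimensional ℝ V]
    (lb : V →ₗ[ℝ] V →ₗ[ℝ] V)
    (hanti : ∀ u : V, lb u u = 0)
    (D : V →ₗ[ℝ] V →ₗ[ℝ] V)
    (hD : ∀ u v w : V, 2 * ⟪D u v, w⟫ = ⟪lb u v, w⟫ - ⟪lb v w, u⟫ + ⟪lb w u, v⟫)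
    (T : V →ₗ[ℝ] V)
    (hTskew : ∀ u v : V, ⟪T u, v⟫ = -⟪u, T v⟫)
    (ξ : V)
    (hCKY : ∀ u v w : V,
      ⟪D u (T v) - T (D u v), w⟫ + ⟪D v (T u) - T (D v u), w⟫
        = 2 * ⟪u, v⟫ * ⟪ξ, w⟫ - ⟪v, w⟫ * ⟪ξ, u⟫ - ⟪u, w⟫ * ⟪ξ, v⟫) :
    T ξ = 0 := by
  have hS := isSymmetric_comp_self_of_skew hTskew
  let b := hS.eigenvectorBasis rfl
  refine InnerProductSpace.ext_inner_left_basis b.toBasis fun i => ?_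
  have hb : T (T (b i)) = hS.eigenvalues rfl i • b i := hS.apply_eigenvectorBasis rfl i
  have hθ := inner_dual_apply_eq_zero_of_apply_apply_eq_smul hanti hD hTskew hCKY
    (b.orthonormal.ne_zero i) hb
  rw [OrthonormalBasis.coe_toBasis, real_inner_comm, hTskew, hθ, neg_zero, inner_zero_right]

/-- If `T` is a CKY tensor on a metric Lie algebra with associated
1-form `θ = ⟪ξ, ·⟫`, then `T ξ = 0`. -/
theorem cky_tensor_vanishes_on_dual_vector
    {V : Type*} [NormedAddCommGroup V] [InnerProductSpace ℝ V] [FiniteDimensional ℝ V]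
    (lb : V →ₗ[ℝ] V →ₗ[ℝ] V)
    (hanti : ∀ u : V, lb u u = 0)
    (hjac : ∀ u v w : V, lb u (lb v w) + lb v (lb w u) + lb w (lb u v) = 0)
    (D : V →ₗ[ℝ] V →ₗ[ℝ] V)
    (hD : ∀ u v w : V, 2 * ⟪D u v, w⟫ = ⟪lb u v, w⟫ - ⟪lb v w, u⟫ + ⟪lb w u, v⟫)
    (T : V →ₗ[ℝ] V)
    (hTskew : ∀ u v : V, ⟪T u, v⟫ = -⟪u, T v⟫)
    (ξ : V)
    (hCKY : ∀ u v w : V,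
      ⟪D u (T v) - T (D u v), w⟫ + ⟪D v (T u) - T (D v u), w⟫
        = 2 * ⟪u, v⟫ * ⟪ξ, w⟫ - ⟪v, w⟫ * ⟪ξ, u⟫ - ⟪u, w⟫ * ⟪ξ, v⟫) :
    T ξ = 0 :=
  cky_tensor_vanishes_on_dual_vector_general lb hanti D hD T hTskew ξ hCKY
end

section
/- Let T be a CKY tensor on a metric Lie algebra (g, ⟨·,·⟩) with associated dual vector ξ ≠ 0. Then the subspace ξ^⊥ is invariant under the adjoint operator ad_ξ, i.e., [ξ, x] ∈ ξ^⊥ for all x ∈ ξ^⊥. -/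
/-!
Taking `u = v` in the CKY equation and pairing with `T u` gives `‖u‖² ⟪ξ, T u⟫ = ⟪∇_u u, T² u⟫`,
which vanishes when `u` is an eigenvector of the symmetric operator `T²`; these eigenvectors span,
so `T ξ = 0`. Taking `u = v = ξ` then gives `T (∇_ξ ξ) = 0`, and `u = v = ∇_ξ ξ` paired with `ξ`
gives `‖∇_ξ ξ‖² ‖ξ‖² = 0`, so `∇_ξ ξ = 0`. Finally the Koszul formula reads
`⟪[ξ, x], ξ⟫ = -⟪∇_ξ ξ, x⟫`.
-/

open scoped RealInnerProductSpace

section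

variable {V : Type*} [NormedAddCommGroup V] [InnerProductSpace ℝ V]

def IsKoszulConnection (lb D : V →ₗ[ℝ] V →ₗ[ℝ] V) : Prop :=
  ∀ u v w : V, 2 * ⟪D u v, w⟫ = ⟪lb u v, w⟫ - ⟪lb v w, u⟫ + ⟪lb w u, v⟫

/-- The conformal Killing–Yano equation, with `(∇_u T) v` written as `D u (T v) - T (D u v)`. -/
def IsCKY (D : V →ₗ[ℝ] V →ₗ[ℝ] V) (T : V →ₗ[ℝ] V) (ξ : V) : Prop :=
  ∀ u v w : V, ⟪D u (T v) - T (D u v), w⟫ + ⟪D v (T u) - T (D v u), w⟫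
    = 2 * ⟪u, v⟫ * ⟪ξ, w⟫ - ⟪v, w⟫ * ⟪ξ, u⟫ - ⟪u, w⟫ * ⟪ξ, v⟫

section Koszul

variable {lb D : V →ₗ[ℝ] V →ₗ[ℝ] V}

theorem apply_swap_of_apply_self_eq_zero (hanti : ∀ u : V, lb u u = 0) (u v : V) :
    lb v u = -lb u v := by
  have h := hanti (u + v)
  simp only [map_add, LinearMap.add_apply, hanti u, hanti v, zero_add, add_zero] at h
  exact eq_neg_of_add_eq_zero_left h

theorem IsKoszulConnection.inner_apply_self (hanti : ∀ u : V, lb u u = 0)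
    (hD : IsKoszulConnection lb D) (u v : V) : ⟪D u v, v⟫ = 0 := by
  have h := hD u v v
  rw [hanti, apply_swap_of_apply_self_eq_zero hanti u v, inner_neg_left] at h
  simpa using h

theorem IsKoszulConnection.inner_lie_self (hanti : ∀ u : V, lb u u = 0)
    (hD : IsKoszulConnection lb D) (ξ x : V) : ⟪lb ξ x, ξ⟫ = -⟪D ξ ξ, x⟫ := by
  have h := hD ξ ξ x
  rw [hanti, apply_swap_of_apply_self_eq_zero hanti ξ x, inner_neg_left, inner_zero_left] at h
  linarith

end Koszul

namespace IsCKY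

variable {D : V →ₗ[ℝ] V →ₗ[ℝ] V} {T : V →ₗ[ℝ] V} {ξ : V}

theorem inner_diag (hT : IsCKY D T ξ) (u w : V) :
    ⟪D u (T u) - T (D u u), w⟫ = ⟪u, u⟫ * ⟪ξ, w⟫ - ⟪u, w⟫ * ⟪ξ, u⟫ := by
  linarith [hT u u w]

variable (hDskew : ∀ u v : V, ⟪D u v, v⟫ = 0) (hTskew : ∀ u v : V, ⟪T u, v⟫ = -⟪u, T v⟫)
include hDskew hTskew

theorem inner_apply_eigenvector (hT : IsCKY D T ξ) {μ : ℝ} {u : V} (hu : T (T u) = μ • u) :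
    ⟪ξ, T u⟫ = 0 := by
  have hTu : ⟪u, T u⟫ = 0 := by linarith [hTskew u u, real_inner_comm u (T u)]
  -- the left-hand side is `⟪∇_u u, T² u⟫ = μ ⟪∇_u u, u⟫ = 0`
  have h := hT.inner_diag u (T u)
  rw [inner_sub_left, hDskew, hTskew, hu, real_inner_smul_right, hDskew, hTu] at h
  rcases mul_eq_zero.mp (by linarith : ⟪u, u⟫ * ⟪ξ, T u⟫ = 0) with hu0 | h
  · rw [inner_self_eq_zero.mp hu0, map_zero, inner_zero_right]
  · exact h

theorem apply_eq_zero [FiniteDimensional ℝ V] (hT : IsCKY D T ξ) : T ξ = 0 := by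
  have hTT : (T ∘ₗ T).IsSymmetric := fun a b => by
    simp only [LinearMap.comp_apply, hTskew (T a), hTskew a, neg_neg]
  let b := hTT.eigenvectorBasis rfl
  refine InnerProductSpace.ext_inner_right_basis b.toBasis fun i => ?_
  rw [OrthonormalBasis.coe_toBasis, inner_zero_left, hTskew,
    hT.inner_apply_eigenvector hDskew hTskew (hTT.apply_eigenvectorBasis rfl i), neg_zero]

theorem apply_self_eq_zero [FiniteDimensional ℝ V] (hT : IsCKY D T ξ) : D ξ ξ = 0 := by
  have hTξ := hT.apply_eq_zero hDskew hTskew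
  set q := D ξ ξ
  have hTq : T q = 0 := ext_inner_right ℝ fun w => by
    have h := hT.inner_diag ξ w
    rw [hTξ, map_zero, zero_sub, inner_neg_left] at h
    rw [inner_zero_left]
    linarith
  have h := hT.inner_diag q ξ
  rw [hTq, map_zero, zero_sub, inner_neg_left, hTskew, hTξ,
    inner_zero_right, hDskew] at h
  rcases mul_eq_zero.mp (by linarith : ⟪q, q⟫ * ⟪ξ, ξ⟫ = 0) with hq | hξ
  · exact inner_self_eq_zero.mp hq
  · simp only [q, inner_self_eq_zero.mp hξ, map_zero]

end IsCKY

end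

theorem cky_ad_xi_preserves_xi_perp_general
    {V : Type*} [NormedAddCommGroup V] [InnerProductSpace ℝ V] [FiniteDimensional ℝ V]
    (lb : V →ₗ[ℝ] V →ₗ[ℝ] V)
    (hanti : ∀ u : V, lb u u = 0)
    (D : V →ₗ[ℝ] V →ₗ[ℝ] V)
    (hD : ∀ u v w : V, 2 * ⟪D u v, w⟫ = ⟪lb u v, w⟫ - ⟪lb v w, u⟫ + ⟪lb w u, v⟫)
    (T : V →ₗ[ℝ] V)
    (hTskew : ∀ u v : V, ⟪T u, v⟫ = -⟪u, T v⟫)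
    (ξ : V)
    (hCKY : ∀ u v w : V,
      ⟪D u (T v) - T (D u v), w⟫ + ⟪D v (T u) - T (D v u), w⟫
        = 2 * ⟪u, v⟫ * ⟪ξ, w⟫ - ⟪v, w⟫ * ⟪ξ, u⟫ - ⟪u, w⟫ * ⟪ξ, v⟫) :
    ∀ x : V, ⟪x, ξ⟫ = 0 → ⟪lb ξ x, ξ⟫ = 0 := by
  have hKoszul : IsKoszulConnection lb D := hD
  have hgeodesic : D ξ ξ = 0 :=
    IsCKY.apply_self_eq_zero (hKoszul.inner_apply_self hanti) hTskew hCKY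
  intro x _
  rw [hKoszul.inner_lie_self hanti, hgeodesic, inner_zero_left, neg_zero]

/-- If `T` is a CKY tensor with nonzero dual vector `ξ`, then `ξ^⊥`
is invariant under `ad_ξ`, i.e. `[ξ, x] ⊥ ξ` whenever `x ⊥ ξ`. -/
theorem cky_ad_xi_preserves_xi_perp
    {V : Type*} [NormedAddCommGroup V] [InnerProductSpace ℝ V] [FiniteDimensional ℝ V]
    (lb : V →ₗ[ℝ] V →ₗ[ℝ] V)
    (hanti : ∀ u : V, lb u u = 0)
    (hjac : ∀ u v w : V, lb u (lb v w) + lb v (lb w u) + lb w (lb u v) = 0)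
    (D : V →ₗ[ℝ] V →ₗ[ℝ] V)
    (hD : ∀ u v w : V, 2 * ⟪D u v, w⟫ = ⟪lb u v, w⟫ - ⟪lb v w, u⟫ + ⟪lb w u, v⟫)
    (T : V →ₗ[ℝ] V)
    (hTskew : ∀ u v : V, ⟪T u, v⟫ = -⟪u, T v⟫)
    (ξ : V) (hξ : ξ ≠ 0)
    (hCKY : ∀ u v w : V,
      ⟪D u (T v) - T (D u v), w⟫ + ⟪D v (T u) - T (D v u), w⟫
        = 2 * ⟪u, v⟫ * ⟪ξ, w⟫ - ⟪v, w⟫ * ⟪ξ, u⟫ - ⟪u, w⟫ * ⟪ξ, v⟫) :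
    ∀ x : V, ⟪x, ξ⟫ = 0 → ⟪lb ξ x, ξ⟫ = 0 :=
  cky_ad_xi_preserves_xi_perp_general lb hanti D hD T hTskew ξ hCKY
end

section
/- Let (h, [·,·], ⟨·,·⟩) be a metric Lie algebra with an invertible Killing-Yano tensor S such that the 2-form μ(x,y) = −2⟨S^{-1}x, y⟩ is closed (i.e., μ([x,y],z) + μ([y,z],x) + μ([z,x],y) = 0). Form the central extension g = h ⊕ ℝξ with brackets [h, ξ]_μ = 0 and [x,y]_μ = [x,y] + μ(x,y)ξ for x,y ∈ h, with inner product extending that of h so that ⟨h, ξ⟩ = 0 and ‖ξ‖ > 0. Then the endomorphism T of g defined by T|_h = S and Tξ = 0 is a strict CKY tensor on (g, ⟨·,·⟩). -/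
open scoped RealInnerProductSpace

/-!
Write every vector as `x + a • ξ` with `x ⟂ ξ`. The Koszul formula for the extended bracket gives
`2⟪∇ᵍ_{x + aξ} (y + bξ), z + cξ⟫ = 2⟪∇ʰ_x y, z⟫ + (c μ(x,y) - a μ(y,z) + b μ(z,x)) ‖ξ‖²`.
Since `μ(x, S y) = 2⟪x, y⟫` on `ξᗮ`, the `μ`-terms of the CKY expression for `S` add up to
`(2c⟪x,y⟫ - a⟪y,z⟫ - b⟪x,z⟫) ‖ξ‖²`, while the remaining terms vanish because `S` is Killing-Yano
on `ξᗮ`; this is the CKY identity with `θ = ⟪ξ, ·⟫`. The Jacobi identity of `[·,·]_μ` is that of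
`h` plus `ξ` times the closedness of `μ`, which is alternating because `S` is skew.
-/

theorem LinearMap.map_add_smul_add_smul_of_apply_eq_zero {R V M : Type*} [CommSemiring R]
    [AddCommMonoid V] [Module R V] [AddCommMonoid M] [Module R M]
    (B : V →ₗ[R] V →ₗ[R] M) {ξ : V} (hB : ∀ u, B ξ u = 0 ∧ B u ξ = 0) (x y : V) (a b : R) :
    B (x + a • ξ) (y + b • ξ) = B x y := by
  simp [(hB _).1, (hB _).2]

theorem LinearMap.jacobi_add_smul_of_isClosed {R V : Type*} [CommRing R] [AddCommGroup V]
    [Module R V] (lb : V →ₗ[R] V →ₗ[R] V) (ω : V →ₗ[R] V →ₗ[R] R) {ξ : V}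
    (hlb : ∀ u, lb u ξ = 0) (hω : ∀ u, ω u ξ = 0)
    (hjac : ∀ u v w, lb u (lb v w) + lb v (lb w u) + lb w (lb u v) = 0)
    (halt : ∀ u v, ω u v = -ω v u)
    (hclosed : ∀ u v w, ω (lb u v) w + ω (lb v w) u + ω (lb w u) v = 0)
    (lbω : V →ₗ[R] V →ₗ[R] V) (hlbω : ∀ u v, lbω u v = lb u v + ω u v • ξ) (u v w : V) :
    lbω u (lbω v w) + lbω v (lbω w u) + lbω w (lbω u v) = 0 := by
  have hnested : ∀ x y z, lbω x (lbω y z) = lb x (lb y z) + ω x (lb y z) • ξ := by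
    intro x y z
    simp [hlbω, hlb, hω]
  rw [hnested, hnested, hnested, halt u, halt v, halt w]
  linear_combination (norm := module) hjac u v w - hclosed v w u • ξ

section OrthogonalDecomposition

variable {V : Type*} [NormedAddCommGroup V] [InnerProductSpace ℝ V] {ξ : V}

variable (ξ) in
theorem exists_mem_orthogonal_singleton_add_smul (x : V) :
    ∃ x₀ ∈ (ℝ ∙ ξ)ᗮ, ∃ a : ℝ, x = x₀ + a • ξ := by
  obtain ⟨y, hy, x₀, hx₀, rfl⟩ := (ℝ ∙ ξ).exists_add_mem_mem_orthogonal x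
  obtain ⟨a, rfl⟩ := Submodule.mem_span_singleton.mp hy
  exact ⟨x₀, hx₀, a, add_comm _ _⟩

theorem inner_add_smul_add_smul_of_mem_orthogonal_singleton {x y : V} (hx : x ∈ (ℝ ∙ ξ)ᗮ)
    (hy : y ∈ (ℝ ∙ ξ)ᗮ) (a b : ℝ) :
    ⟪x + a • ξ, y + b • ξ⟫ = ⟪x, y⟫ + a * b * ⟪ξ, ξ⟫ := by
  rw [Submodule.mem_orthogonal_singleton_iff_inner_left] at hx
  rw [Submodule.mem_orthogonal_singleton_iff_inner_right] at hy
  simp only [inner_add_left, inner_add_right, real_inner_smul_left, real_inner_smul_right, hx, hy]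
  ring

theorem inner_add_smul_right_of_mem_orthogonal_singleton {y : V} (hy : y ∈ (ℝ ∙ ξ)ᗮ) (b : ℝ) :
    ⟪ξ, y + b • ξ⟫ = b * ⟪ξ, ξ⟫ := by
  simpa using inner_add_smul_add_smul_of_mem_orthogonal_singleton
    (Submodule.zero_mem _) hy 1 b

end OrthogonalDecomposition

namespace CentralExtension

variable {V : Type*} [NormedAddCommGroup V] [InnerProductSpace ℝ V] {ξ : V}

theorem cocycle_alternating (S : V →ₗ[ℝ] V) (hSskew : ∀ u v : V, ⟪S u, v⟫ = -⟪u, S v⟫)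
    (hSinv : ∀ v ∈ (ℝ ∙ ξ)ᗮ, ∃ u ∈ (ℝ ∙ ξ)ᗮ, S u = v) (μ : V →ₗ[ℝ] V →ₗ[ℝ] ℝ)
    (hμ : ∀ u v : V, u ∈ (ℝ ∙ ξ)ᗮ → v ∈ (ℝ ∙ ξ)ᗮ → μ (S u) v = -2 * ⟪u, v⟫)
    (hμxi : ∀ u : V, μ ξ u = 0 ∧ μ u ξ = 0) (u v : V) :
    μ u v = -μ v u := by
  obtain ⟨u, hu, a, rfl⟩ := exists_mem_orthogonal_singleton_add_smul ξ u
  obtain ⟨v, hv, b, rfl⟩ := exists_mem_orthogonal_singleton_add_smul ξ v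
  simp only [μ.map_add_smul_add_smul_of_apply_eq_zero hμxi]
  obtain ⟨p, hp, rfl⟩ := hSinv u hu
  obtain ⟨q, hq, rfl⟩ := hSinv v hv
  rw [hμ p _ hp hv, hμ q _ hq hu, ← neg_neg ⟪p, S q⟫, ← hSskew, real_inner_comm]
  ring

theorem cocycle_apply_S_right (S : V →ₗ[ℝ] V) (hSskew : ∀ u v : V, ⟪S u, v⟫ = -⟪u, S v⟫)
    (hSinv : ∀ v ∈ (ℝ ∙ ξ)ᗮ, ∃ u ∈ (ℝ ∙ ξ)ᗮ, S u = v) (μ : V →ₗ[ℝ] V →ₗ[ℝ] ℝ)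
    (hμ : ∀ u v : V, u ∈ (ℝ ∙ ξ)ᗮ → v ∈ (ℝ ∙ ξ)ᗮ → μ (S u) v = -2 * ⟪u, v⟫)
    (hμxi : ∀ u : V, μ ξ u = 0 ∧ μ u ξ = 0) {x y : V} (hx : x ∈ (ℝ ∙ ξ)ᗮ)
    (hy : y ∈ (ℝ ∙ ξ)ᗮ) :
    μ x (S y) = 2 * ⟪x, y⟫ := by
  rw [cocycle_alternating S hSskew hSinv μ hμ hμxi, hμ y x hy hx, real_inner_comm]
  ring

theorem two_mul_inner_levi_civita (lbh : V →ₗ[ℝ] V →ₗ[ℝ] V)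
    (hhH : ∀ u v : V, lbh u v ∈ (ℝ ∙ ξ)ᗮ) (hhxi : ∀ u : V, lbh ξ u = 0 ∧ lbh u ξ = 0)
    (Dh : V →ₗ[ℝ] V →ₗ[ℝ] V)
    (hDh : ∀ u v w : V, u ∈ (ℝ ∙ ξ)ᗮ → v ∈ (ℝ ∙ ξ)ᗮ → w ∈ (ℝ ∙ ξ)ᗮ →
      2 * ⟪Dh u v, w⟫ = ⟪lbh u v, w⟫ - ⟪lbh v w, u⟫ + ⟪lbh w u, v⟫)
    (μ : V →ₗ[ℝ] V →ₗ[ℝ] ℝ) (hμxi : ∀ u : V, μ ξ u = 0 ∧ μ u ξ = 0)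
    (lbg : V →ₗ[ℝ] V →ₗ[ℝ] V) (hlbg : ∀ u v : V, lbg u v = lbh u v + μ u v • ξ)
    (Dg : V →ₗ[ℝ] V →ₗ[ℝ] V)
    (hDg : ∀ u v w : V, 2 * ⟪Dg u v, w⟫ = ⟪lbg u v, w⟫ - ⟪lbg v w, u⟫ + ⟪lbg w u, v⟫)
    {x y z : V} (hx : x ∈ (ℝ ∙ ξ)ᗮ) (hy : y ∈ (ℝ ∙ ξ)ᗮ) (hz : z ∈ (ℝ ∙ ξ)ᗮ) (a b c : ℝ) :
    2 * ⟪Dg (x + a • ξ) (y + b • ξ), z + c • ξ⟫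
      = 2 * ⟪Dh x y, z⟫ + (c * μ x y - a * μ y z + b * μ z x) * ⟪ξ, ξ⟫ := by
  simp only [hDg, hlbg, lbh.map_add_smul_add_smul_of_apply_eq_zero hhxi,
    μ.map_add_smul_add_smul_of_apply_eq_zero hμxi,
    inner_add_smul_add_smul_of_mem_orthogonal_singleton (hhH _ _) hx,
    inner_add_smul_add_smul_of_mem_orthogonal_singleton (hhH _ _) hy,
    inner_add_smul_add_smul_of_mem_orthogonal_singleton (hhH _ _) hz, hDh x y z hx hy hz]
  ring

theorem inner_levi_civita_S_add_inner_levi_civita (lbh : V →ₗ[ℝ] V →ₗ[ℝ] V)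
    (hhH : ∀ u v : V, lbh u v ∈ (ℝ ∙ ξ)ᗮ) (hhxi : ∀ u : V, lbh ξ u = 0 ∧ lbh u ξ = 0)
    (Dh : V →ₗ[ℝ] V →ₗ[ℝ] V)
    (hDh : ∀ u v w : V, u ∈ (ℝ ∙ ξ)ᗮ → v ∈ (ℝ ∙ ξ)ᗮ → w ∈ (ℝ ∙ ξ)ᗮ →
      2 * ⟪Dh u v, w⟫ = ⟪lbh u v, w⟫ - ⟪lbh v w, u⟫ + ⟪lbh w u, v⟫)
    (S : V →ₗ[ℝ] V) (hSskew : ∀ u v : V, ⟪S u, v⟫ = -⟪u, S v⟫)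
    (hSH : ∀ u ∈ (ℝ ∙ ξ)ᗮ, S u ∈ (ℝ ∙ ξ)ᗮ) (hSinv : ∀ v ∈ (ℝ ∙ ξ)ᗮ, ∃ u ∈ (ℝ ∙ ξ)ᗮ, S u = v)
    (μ : V →ₗ[ℝ] V →ₗ[ℝ] ℝ)
    (hμ : ∀ u v : V, u ∈ (ℝ ∙ ξ)ᗮ → v ∈ (ℝ ∙ ξ)ᗮ → μ (S u) v = -2 * ⟪u, v⟫)
    (hμxi : ∀ u : V, μ ξ u = 0 ∧ μ u ξ = 0)
    (lbg : V →ₗ[ℝ] V →ₗ[ℝ] V) (hlbg : ∀ u v : V, lbg u v = lbh u v + μ u v • ξ)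
    (Dg : V →ₗ[ℝ] V →ₗ[ℝ] V)
    (hDg : ∀ u v w : V, 2 * ⟪Dg u v, w⟫ = ⟪lbg u v, w⟫ - ⟪lbg v w, u⟫ + ⟪lbg w u, v⟫)
    {x y z : V} (hx : x ∈ (ℝ ∙ ξ)ᗮ) (hy : y ∈ (ℝ ∙ ξ)ᗮ) (hz : z ∈ (ℝ ∙ ξ)ᗮ) (a b c : ℝ) :
    ⟪Dg (x + a • ξ) (S y), z + c • ξ⟫ + ⟪Dg (x + a • ξ) (y + b • ξ), S z⟫
      = ⟪Dh x (S y), z⟫ + ⟪Dh x y, S z⟫ + (c * ⟪x, y⟫ - b * ⟪x, z⟫) * ⟪ξ, ξ⟫ := by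
  have hSy := two_mul_inner_levi_civita lbh hhH hhxi Dh hDh μ hμxi lbg hlbg Dg hDg
    hx (hSH y hy) hz a 0 c
  have hSz := two_mul_inner_levi_civita lbh hhH hhxi Dh hDh μ hμxi lbg hlbg Dg hDg
    hx hy (hSH z hz) a b 0
  simp only [zero_smul, add_zero] at hSy hSz
  rw [cocycle_apply_S_right S hSskew hSinv μ hμ hμxi hx hy, hμ y z hy hz] at hSy
  rw [cocycle_apply_S_right S hSskew hSinv μ hμ hμxi hy hz, hμ z x hz hx,
    real_inner_comm x z] at hSz
  linear_combination (hSy + hSz) / 2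

theorem cky_identity (lbh : V →ₗ[ℝ] V →ₗ[ℝ] V)
    (hhH : ∀ u v : V, lbh u v ∈ (ℝ ∙ ξ)ᗮ) (hhxi : ∀ u : V, lbh ξ u = 0 ∧ lbh u ξ = 0)
    (Dh : V →ₗ[ℝ] V →ₗ[ℝ] V)
    (hDh : ∀ u v w : V, u ∈ (ℝ ∙ ξ)ᗮ → v ∈ (ℝ ∙ ξ)ᗮ → w ∈ (ℝ ∙ ξ)ᗮ →
      2 * ⟪Dh u v, w⟫ = ⟪lbh u v, w⟫ - ⟪lbh v w, u⟫ + ⟪lbh w u, v⟫)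
    (S : V →ₗ[ℝ] V) (hSskew : ∀ u v : V, ⟪S u, v⟫ = -⟪u, S v⟫) (hSxi : S ξ = 0)
    (hSH : ∀ u ∈ (ℝ ∙ ξ)ᗮ, S u ∈ (ℝ ∙ ξ)ᗮ) (hSinv : ∀ v ∈ (ℝ ∙ ξ)ᗮ, ∃ u ∈ (ℝ ∙ ξ)ᗮ, S u = v)
    (hSKY : ∀ u v w : V, u ∈ (ℝ ∙ ξ)ᗮ → v ∈ (ℝ ∙ ξ)ᗮ → w ∈ (ℝ ∙ ξ)ᗮ →
      ⟪Dh u (S v) - S (Dh u v), w⟫ + ⟪Dh v (S u) - S (Dh v u), w⟫ = 0)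
    (μ : V →ₗ[ℝ] V →ₗ[ℝ] ℝ)
    (hμ : ∀ u v : V, u ∈ (ℝ ∙ ξ)ᗮ → v ∈ (ℝ ∙ ξ)ᗮ → μ (S u) v = -2 * ⟪u, v⟫)
    (hμxi : ∀ u : V, μ ξ u = 0 ∧ μ u ξ = 0)
    (lbg : V →ₗ[ℝ] V →ₗ[ℝ] V) (hlbg : ∀ u v : V, lbg u v = lbh u v + μ u v • ξ)
    (Dg : V →ₗ[ℝ] V →ₗ[ℝ] V)
    (hDg : ∀ u v w : V, 2 * ⟪Dg u v, w⟫ = ⟪lbg u v, w⟫ - ⟪lbg v w, u⟫ + ⟪lbg w u, v⟫)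
    (u v w : V) :
    ⟪Dg u (S v) - S (Dg u v), w⟫ + ⟪Dg v (S u) - S (Dg v u), w⟫
      = 2 * ⟪u, v⟫ * ⟪ξ, w⟫ - ⟪v, w⟫ * ⟪ξ, u⟫ - ⟪u, w⟫ * ⟪ξ, v⟫ := by
  obtain ⟨u, hu, a, rfl⟩ := exists_mem_orthogonal_singleton_add_smul ξ u
  obtain ⟨v, hv, b, rfl⟩ := exists_mem_orthogonal_singleton_add_smul ξ v
  obtain ⟨w, hw, c, rfl⟩ := exists_mem_orthogonal_singleton_add_smul ξ w
  have hSξ : ∀ (x : V) (t : ℝ), S (x + t • ξ) = S x := by simp [hSxi]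
  have hKY := hSKY u v w hu hv hw
  rw [inner_sub_left, inner_sub_left, hSskew (Dh u v), hSskew (Dh v u)] at hKY
  rw [inner_sub_left, inner_sub_left, hSskew (Dg _ _), hSskew (Dg _ _), hSξ, hSξ, hSξ]
  have huvw := inner_levi_civita_S_add_inner_levi_civita lbh hhH hhxi Dh hDh S hSskew hSH hSinv
    μ hμ hμxi lbg hlbg Dg hDg hu hv hw a b c
  have hvuw := inner_levi_civita_S_add_inner_levi_civita lbh hhH hhxi Dh hDh S hSskew hSH hSinv
    μ hμ hμxi lbg hlbg Dg hDg hv hu hw b a c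
  simp only [inner_add_smul_add_smul_of_mem_orthogonal_singleton hu hv,
    inner_add_smul_add_smul_of_mem_orthogonal_singleton hv hw,
    inner_add_smul_add_smul_of_mem_orthogonal_singleton hu hw,
    inner_add_smul_right_of_mem_orthogonal_singleton hu,
    inner_add_smul_right_of_mem_orthogonal_singleton hv,
    inner_add_smul_right_of_mem_orthogonal_singleton hw]
  rw [real_inner_comm u v] at hvuw
  linear_combination huvw + hvuw + hKY

end CentralExtension

theorem central_extension_strict_cky_general
    {V : Type*} [NormedAddCommGroup V] [InnerProductSpace ℝ V]
    (ξ : V) (hξ : ξ ≠ 0)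
    -- the Lie bracket of h, extended by zero on ℝξ
    (lbh : V →ₗ[ℝ] V →ₗ[ℝ] V)
    (hhH : ∀ u v : V, lbh u v ∈ (ℝ ∙ ξ)ᗮ)
    (hhxi : ∀ u : V, lbh ξ u = 0 ∧ lbh u ξ = 0)
    (hhjac : ∀ u v w : V, lbh u (lbh v w) + lbh v (lbh w u) + lbh w (lbh u v) = 0)
    -- the Levi-Civita connection of (h, ⟨·,·⟩)
    (Dh : V →ₗ[ℝ] V →ₗ[ℝ] V)
    (hDh : ∀ u v w : V, u ∈ (ℝ ∙ ξ)ᗮ → v ∈ (ℝ ∙ ξ)ᗮ → w ∈ (ℝ ∙ ξ)ᗮ →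
      2 * ⟪Dh u v, w⟫ = ⟪lbh u v, w⟫ - ⟪lbh v w, u⟫ + ⟪lbh w u, v⟫)
    -- the invertible KY tensor S on h, extended by S ξ = 0
    (S : V →ₗ[ℝ] V)
    (hSskew : ∀ u v : V, ⟪S u, v⟫ = -⟪u, S v⟫)
    (hSxi : S ξ = 0)
    (hSH : ∀ u ∈ (ℝ ∙ ξ)ᗮ, S u ∈ (ℝ ∙ ξ)ᗮ)
    (hSinv : ∀ v ∈ (ℝ ∙ ξ)ᗮ, ∃ u ∈ (ℝ ∙ ξ)ᗮ, S u = v)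
    (hSKY : ∀ u v w : V, u ∈ (ℝ ∙ ξ)ᗮ → v ∈ (ℝ ∙ ξ)ᗮ → w ∈ (ℝ ∙ ξ)ᗮ →
      ⟪Dh u (S v) - S (Dh u v), w⟫ + ⟪Dh v (S u) - S (Dh v u), w⟫ = 0)
    -- the 2-form μ(x,y) = -2⟪S⁻¹ x, y⟫ on h, extended by zero on ℝξ
    (μ : V →ₗ[ℝ] V →ₗ[ℝ] ℝ)
    (hμ : ∀ u v : V, u ∈ (ℝ ∙ ξ)ᗮ → v ∈ (ℝ ∙ ξ)ᗮ → μ (S u) v = -2 * ⟪u, v⟫)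
    (hμxi : ∀ u : V, μ ξ u = 0 ∧ μ u ξ = 0)
    (hμclosed : ∀ u v w : V, μ (lbh u v) w + μ (lbh v w) u + μ (lbh w u) v = 0)
    -- the extended bracket [x,y]_μ = [x,y] + μ(x,y) ξ
    (lbg : V →ₗ[ℝ] V →ₗ[ℝ] V)
    (hlbg : ∀ u v : V, lbg u v = lbh u v + μ u v • ξ)
    -- the Levi-Civita connection of (g, ⟨·,·⟩)
    (Dg : V →ₗ[ℝ] V →ₗ[ℝ] V)
    (hDg : ∀ u v w : V, 2 * ⟪Dg u v, w⟫ = ⟪lbg u v, w⟫ - ⟪lbg v w, u⟫ + ⟪lbg w u, v⟫) :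
    (∀ u v w : V, lbg u (lbg v w) + lbg v (lbg w u) + lbg w (lbg u v) = 0) ∧
    ∃ ζ : V, ζ ≠ 0 ∧ ∀ u v w : V,
      ⟪Dg u (S v) - S (Dg u v), w⟫ + ⟪Dg v (S u) - S (Dg v u), w⟫
        = 2 * ⟪u, v⟫ * ⟪ζ, w⟫ - ⟪v, w⟫ * ⟪ζ, u⟫ - ⟪u, w⟫ * ⟪ζ, v⟫ :=
  ⟨lbh.jacobi_add_smul_of_isClosed μ (fun u => (hhxi u).2) (fun u => (hμxi u).2) hhjac
      (CentralExtension.cocycle_alternating S hSskew hSinv μ hμ hμxi) hμclosed lbg hlbg,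
    ξ, hξ,
    CentralExtension.cky_identity lbh hhH hhxi Dh hDh S hSskew hSxi hSH hSinv hSKY μ hμ hμxi lbg hlbg
      Dg hDg⟩

/-- central extension of a metric Lie algebra `h = ξ^⊥` by an
invertible Killing-Yano tensor `S` with `μ(x,y) = -2⟪S⁻¹x, y⟫` closed, produces a
strict CKY tensor `T` (`T|_h = S`, `Tξ = 0`, i.e. `T = S`) on
`g = h ⊕_μ ℝξ`. The conclusion includes the Jacobi identity for the extended
bracket. -/
theorem central_extension_strict_cky
    {V : Type*} [NormedAddCommGroup V] [InnerProductSpace ℝ V] [FiniteDimensional ℝ V]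
    (ξ : V) (hξ : ξ ≠ 0)
    -- the Lie bracket of h, extended by zero on ℝξ
    (lbh : V →ₗ[ℝ] V →ₗ[ℝ] V)
    (hhH : ∀ u v : V, lbh u v ∈ (ℝ ∙ ξ)ᗮ)
    (hhxi : ∀ u : V, lbh ξ u = 0 ∧ lbh u ξ = 0)
    (hhanti : ∀ u : V, lbh u u = 0)
    (hhjac : ∀ u v w : V, lbh u (lbh v w) + lbh v (lbh w u) + lbh w (lbh u v) = 0)
    -- the Levi-Civita connection of (h, ⟨·,·⟩)
    (Dh : V →ₗ[ℝ] V →ₗ[ℝ] V)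
    (hDhH : ∀ u v : V, Dh u v ∈ (ℝ ∙ ξ)ᗮ)
    (hDh : ∀ u v w : V, u ∈ (ℝ ∙ ξ)ᗮ → v ∈ (ℝ ∙ ξ)ᗮ → w ∈ (ℝ ∙ ξ)ᗮ →
      2 * ⟪Dh u v, w⟫ = ⟪lbh u v, w⟫ - ⟪lbh v w, u⟫ + ⟪lbh w u, v⟫)
    -- the invertible KY tensor S on h, extended by S ξ = 0
    (S : V →ₗ[ℝ] V)
    (hSskew : ∀ u v : V, ⟪S u, v⟫ = -⟪u, S v⟫)
    (hSxi : S ξ = 0)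
    (hSH : ∀ u ∈ (ℝ ∙ ξ)ᗮ, S u ∈ (ℝ ∙ ξ)ᗮ)
    (hSinv : ∀ v ∈ (ℝ ∙ ξ)ᗮ, ∃ u ∈ (ℝ ∙ ξ)ᗮ, S u = v)
    (hSKY : ∀ u v w : V, u ∈ (ℝ ∙ ξ)ᗮ → v ∈ (ℝ ∙ ξ)ᗮ → w ∈ (ℝ ∙ ξ)ᗮ →
      ⟪Dh u (S v) - S (Dh u v), w⟫ + ⟪Dh v (S u) - S (Dh v u), w⟫ = 0)
    -- the 2-form μ(x,y) = -2⟪S⁻¹ x, y⟫ on h, extended by zero on ℝξ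
    (μ : V →ₗ[ℝ] V →ₗ[ℝ] ℝ)
    (hμ : ∀ u v : V, u ∈ (ℝ ∙ ξ)ᗮ → v ∈ (ℝ ∙ ξ)ᗮ → μ (S u) v = -2 * ⟪u, v⟫)
    (hμxi : ∀ u : V, μ ξ u = 0 ∧ μ u ξ = 0)
    (hμclosed : ∀ u v w : V, μ (lbh u v) w + μ (lbh v w) u + μ (lbh w u) v = 0)
    -- the extended bracket [x,y]_μ = [x,y] + μ(x,y) ξ
    (lbg : V →ₗ[ℝ] V →ₗ[ℝ] V)
    (hlbg : ∀ u v : V, lbg u v = lbh u v + μ u v • ξ)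
    -- the Levi-Civita connection of (g, ⟨·,·⟩)
    (Dg : V →ₗ[ℝ] V →ₗ[ℝ] V)
    (hDg : ∀ u v w : V, 2 * ⟪Dg u v, w⟫ = ⟪lbg u v, w⟫ - ⟪lbg v w, u⟫ + ⟪lbg w u, v⟫) :
    (∀ u v w : V, lbg u (lbg v w) + lbg v (lbg w u) + lbg w (lbg u v) = 0) ∧
    ∃ ζ : V, ζ ≠ 0 ∧ ∀ u v w : V,
      ⟪Dg u (S v) - S (Dg u v), w⟫ + ⟪Dg v (S u) - S (Dg v u), w⟫
        = 2 * ⟪u, v⟫ * ⟪ζ, w⟫ - ⟪v, w⟫ * ⟪ζ, u⟫ - ⟪u, w⟫ * ⟪ζ, v⟫ :=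
  central_extension_strict_cky_general ξ hξ lbh hhH hhxi hhjac Dh hDh S hSskew hSxi hSH hSinv hSKY μ
    hμ hμxi hμclosed lbg hlbg Dg hDg
end

section
/- Let g be the 5-dimensional real Lie algebra with orthonormal basis {ξ, z₁, z₂, x, y} and Lie brackets [ξ,x] = r z₁ + a₄ y, [ξ,y] = r z₂ − a₄ x, [x,y] = s ξ, where r, s > 0 and a₄ = (s² − r²)/s. Then the skew-symmetric endomorphism T determined by the 2-form ω = (2(s²+2r²)/(r²s)) z¹∧z² + (2/r)(z¹∧x* + z²∧y*) + (4/s) x*∧y* (in the metric dual basis) is a strict CKY tensor with associated dual vector ξ. -/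
open scoped RealInnerProductSpace

noncomputable abbrev V5 : Type := EuclideanSpace ℝ (Fin 5)

/-- standard orthonormal basis `{ξ, z₁, z₂, x, y} = {e 0, e 1, e 2, e 3, e 4}`. -/
noncomputable abbrev e (i : Fin 5) : V5 := EuclideanSpace.single i (1 : ℝ)

/-!
The CKY equation needs no explicit Levi-Civita connection: for skew-symmetric `T`,
`⟪(∇_u T) v, w⟫ = ⟪∇_u (T v), w⟫ + ⟪∇_u v, T w⟫`, and both terms are given by the Koszul formula
in terms of the bracket alone. Reading the bracket and `T` off their values on the basis as
explicit coordinate formulas, the Jacobi identity, the skew-symmetry of `T` and the CKY equation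
become polynomial identities in the coordinates of `u, v, w` with coefficients in `r, s, r⁻¹, s⁻¹`.
-/

section Koszul

variable {E : Type*} [NormedAddCommGroup E] [InnerProductSpace ℝ E]

def koszulForm (lb : E →ₗ[ℝ] E →ₗ[ℝ] E) (u v w : E) : ℝ :=
  ⟪lb u v, w⟫ - ⟪lb v w, u⟫ + ⟪lb w u, v⟫

theorem two_mul_inner_covDeriv_eq_koszulForm {lb D : E →ₗ[ℝ] E →ₗ[ℝ] E}
    (hD : ∀ u v w : E, 2 * ⟪D u v, w⟫ = koszulForm lb u v w)
    {T : E →ₗ[ℝ] E} (hT : ∀ u v : E, ⟪T u, v⟫ = -⟪u, T v⟫) (u v w : E) :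
    2 * ⟪D u (T v) - T (D u v), w⟫ = koszulForm lb u (T v) w + koszulForm lb u v (T w) := by
  rw [inner_sub_left, hT, mul_sub, hD, mul_neg, hD, sub_neg_eq_add]

end Koszul

section Coordinates

variable {𝕜 : Type*} [RCLike 𝕜] {ι : Type*} [Fintype ι] [DecidableEq ι]
  {M : Type*} [AddCommGroup M] [Module 𝕜 M]

theorem LinearMap.apply_eq_sum_single (f : EuclideanSpace 𝕜 ι →ₗ[𝕜] M) (u : EuclideanSpace 𝕜 ι) :
    f u = ∑ i, u i • f (EuclideanSpace.single i 1) := by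
  conv_lhs => rw [← (EuclideanSpace.basisFun ι 𝕜).sum_repr u]
  simp [map_sum]

theorem LinearMap.apply_apply_eq_sum_single
    (B : EuclideanSpace 𝕜 ι →ₗ[𝕜] EuclideanSpace 𝕜 ι →ₗ[𝕜] M) (u v : EuclideanSpace 𝕜 ι) :
    B u v = ∑ i, ∑ j, (u i * v j) • B (EuclideanSpace.single i 1) (EuclideanSpace.single j 1) := by
  rw [B.apply_eq_sum_single u, LinearMap.sum_apply]
  refine Finset.sum_congr rfl fun i _ => ?_
  rw [LinearMap.smul_apply, LinearMap.apply_eq_sum_single, Finset.smul_sum]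
  simp only [smul_smul]

end Coordinates

theorem V5.ext {u v : V5} (h0 : u 0 = v 0) (h1 : u 1 = v 1) (h2 : u 2 = v 2) (h3 : u 3 = v 3)
    (h4 : u 4 = v 4) : u = v := by
  ext k; fin_cases k <;> assumption

/-- The bracket `[ξ,x] = r z₁ + a y`, `[ξ,y] = r z₂ − a x`, `[x,y] = s ξ` in the coordinates
`(ξ, z₁, z₂, x, y)`. -/
noncomputable def grsBracket (r a s : ℝ) : V5 →ₗ[ℝ] V5 →ₗ[ℝ] V5 :=
  LinearMap.mk₂ ℝ (fun u v => !₂[s * (u 3 * v 4 - u 4 * v 3), r * (u 0 * v 3 - u 3 * v 0),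
      r * (u 0 * v 4 - u 4 * v 0), -a * (u 0 * v 4 - u 4 * v 0), a * (u 0 * v 3 - u 3 * v 0)])
    (fun _ _ _ => by
      apply V5.ext <;>
        simp only [Matrix.cons_val, PiLp.add_apply, Matrix.cons_val_zero, Matrix.cons_val_one,
          Fin.isValue] <;> ring)
    (fun _ _ _ => by
      apply V5.ext <;>
        simp only [Matrix.cons_val, PiLp.smul_apply, smul_eq_mul, Matrix.cons_val_zero,
          Matrix.cons_val_one, Fin.isValue] <;> ring)
    (fun _ _ _ => by
      apply V5.ext <;>
        simp only [Matrix.cons_val, PiLp.add_apply, Matrix.cons_val_zero, Matrix.cons_val_one,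
          Fin.isValue] <;> ring)
    (fun _ _ _ => by
      apply V5.ext <;>
        simp only [Matrix.cons_val, PiLp.smul_apply, smul_eq_mul, Matrix.cons_val_zero,
          Matrix.cons_val_one, Fin.isValue] <;> ring)

theorem grsBracket_jacobi (r a s : ℝ) (u v w : V5) :
    grsBracket r a s u (grsBracket r a s v w) + grsBracket r a s v (grsBracket r a s w u)
      + grsBracket r a s w (grsBracket r a s u v) = 0 := by
  apply V5.ext <;>
    simp only [grsBracket, LinearMap.mk₂_apply, Matrix.cons_val, PiLp.add_apply, PiLp.zero_apply,
      Matrix.cons_val_zero, Matrix.cons_val_one, Fin.isValue] <;> ring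

/-- The endomorphism `T` with `ω(u, v) = ⟪T u, v⟫` for the 2-form
`ω = c z¹∧z² + (2/r)(z¹∧x* + z²∧y*) + (4/s) x*∧y*`. -/
noncomputable def grsTensor (r s : ℝ) (u : V5) : V5 :=
  let c := 2 * (s ^ 2 + 2 * r ^ 2) / (r ^ 2 * s)
  !₂[0, -c * u 2 - 2 / r * u 3, c * u 1 - 2 / r * u 4, 2 / r * u 1 - 4 / s * u 4,
    2 / r * u 2 + 4 / s * u 3]

theorem inner_grsTensor_left (r s : ℝ) (u v : V5) :
    ⟪grsTensor r s u, v⟫ = -⟪u, grsTensor r s v⟫ := by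
  simp only [grsTensor, PiLp.inner_apply, RCLike.inner_apply, conj_trivial, Fin.sum_univ_five,
    Fin.isValue, Matrix.cons_val, Matrix.cons_val_zero, Matrix.cons_val_one]
  ring

theorem koszulForm_grsBracket_grsTensor {r s : ℝ} (hr : r ≠ 0) (hs : s ≠ 0) (u v w : V5) :
    let lb := grsBracket r ((s ^ 2 - r ^ 2) / s) s
    let T := grsTensor r s
    koszulForm lb u (T v) w + koszulForm lb u v (T w) + koszulForm lb v (T u) w
        + koszulForm lb v u (T w)
      = 2 * (2 * ⟪u, v⟫ * ⟪e 0, w⟫ - ⟪v, w⟫ * ⟪e 0, u⟫ - ⟪u, w⟫ * ⟪e 0, v⟫) := by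
  simp only [koszulForm, grsBracket, LinearMap.mk₂_apply, grsTensor, PiLp.inner_apply,
    RCLike.inner_apply, conj_trivial, Fin.sum_univ_five, Fin.isValue, Matrix.cons_val,
    Matrix.cons_val_zero, Matrix.cons_val_one, PiLp.single_apply, Fin.reduceEq,
    ↓reduceIte]
  field_simp
  ring

theorem eq_grsBracket {r s : ℝ} {lb : V5 →ₗ[ℝ] V5 →ₗ[ℝ] V5} (hanti : lb.IsAlt)
    (hb1 : lb (e 0) (e 3) = r • e 1 + ((s^2 - r^2)/s) • e 4)
    (hb2 : lb (e 0) (e 4) = r • e 2 - ((s^2 - r^2)/s) • e 3)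
    (hb3 : lb (e 3) (e 4) = s • e 0)
    (hb4 : lb (e 0) (e 1) = 0) (hb5 : lb (e 0) (e 2) = 0)
    (hb6 : lb (e 1) (e 2) = 0) (hb7 : lb (e 1) (e 3) = 0)
    (hb8 : lb (e 1) (e 4) = 0) (hb9 : lb (e 2) (e 3) = 0)
    (hb10 : lb (e 2) (e 4) = 0) :
    lb = grsBracket r ((s ^ 2 - r ^ 2) / s) s := by
  refine LinearMap.ext₂ fun u v => ?_
  rw [lb.apply_apply_eq_sum_single]
  simp only [Fin.sum_univ_five, hanti.self_eq_zero, ← hanti.neg (e 0) (e 1),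
    ← hanti.neg (e 0) (e 2), ← hanti.neg (e 0) (e 3), ← hanti.neg (e 0) (e 4),
    ← hanti.neg (e 1) (e 2), ← hanti.neg (e 1) (e 3), ← hanti.neg (e 1) (e 4),
    ← hanti.neg (e 2) (e 3), ← hanti.neg (e 2) (e 4), ← hanti.neg (e 3) (e 4),
    hb1, hb2, hb3, hb4, hb5, hb6, hb7, hb8, hb9, hb10]
  apply V5.ext <;>
    simp only [grsBracket, LinearMap.mk₂_apply, Matrix.cons_val, PiLp.add_apply, PiLp.sub_apply,
      PiLp.neg_apply, PiLp.smul_apply, PiLp.zero_apply, PiLp.single_apply, Fin.reduceEq,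
      ↓reduceIte, smul_eq_mul, Matrix.cons_val_zero, Matrix.cons_val_one, Fin.isValue] <;> ring

theorem eq_grsTensor {r s : ℝ} {T : V5 →ₗ[ℝ] V5}
    (hT0 : T (e 0) = 0)
    (hT1 : T (e 1) = (2*(s^2 + 2*r^2)/(r^2*s)) • e 2 + (2/r) • e 3)
    (hT2 : T (e 2) = -(2*(s^2 + 2*r^2)/(r^2*s)) • e 1 + (2/r) • e 4)
    (hT3 : T (e 3) = -(2/r) • e 1 + (4/s) • e 4)
    (hT4 : T (e 4) = -(2/r) • e 2 - (4/s) • e 3) (u : V5) :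
    T u = grsTensor r s u := by
  rw [T.apply_eq_sum_single]
  simp only [Fin.sum_univ_five, hT0, hT1, hT2, hT3, hT4]
  apply V5.ext <;>
    simp only [grsTensor, Matrix.cons_val, PiLp.add_apply, PiLp.sub_apply, PiLp.smul_apply,
      PiLp.zero_apply, PiLp.single_apply, Fin.reduceEq, ↓reduceIte, smul_eq_mul,
      Matrix.cons_val_zero, Matrix.cons_val_one, Fin.isValue] <;> ring

/-- on the Lie algebra `g_{r,s}` with orthonormal basis
`{ξ, z₁, z₂, x, y}` and brackets `[ξ,x] = r z₁ + a₄ y`, `[ξ,y] = r z₂ − a₄ x`,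
`[x,y] = s ξ` (`a₄ = (s²−r²)/s`), the tensor `T` determined by the 2-form
`ω = (2(s²+2r²)/(r²s)) z¹∧z² + (2/r)(z¹∧x* + z²∧y*) + (4/s) x*∧y*` is a strict
CKY tensor with dual vector `ξ`; moreover the brackets satisfy the Jacobi
identity. -/
theorem grs_strict_cky
    (r s : ℝ) (hr : 0 < r) (hs : 0 < s)
    (lb : V5 →ₗ[ℝ] V5 →ₗ[ℝ] V5)
    (hanti : ∀ u : V5, lb u u = 0)
    (hb1 : lb (e 0) (e 3) = r • e 1 + ((s^2 - r^2)/s) • e 4)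
    (hb2 : lb (e 0) (e 4) = r • e 2 - ((s^2 - r^2)/s) • e 3)
    (hb3 : lb (e 3) (e 4) = s • e 0)
    (hb4 : lb (e 0) (e 1) = 0) (hb5 : lb (e 0) (e 2) = 0)
    (hb6 : lb (e 1) (e 2) = 0) (hb7 : lb (e 1) (e 3) = 0)
    (hb8 : lb (e 1) (e 4) = 0) (hb9 : lb (e 2) (e 3) = 0)
    (hb10 : lb (e 2) (e 4) = 0)
    (D : V5 →ₗ[ℝ] V5 →ₗ[ℝ] V5)
    (hD : ∀ u v w : V5, 2 * ⟪D u v, w⟫ = ⟪lb u v, w⟫ - ⟪lb v w, u⟫ + ⟪lb w u, v⟫)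
    (T : V5 →ₗ[ℝ] V5)
    (hT0 : T (e 0) = 0)
    (hT1 : T (e 1) = (2*(s^2 + 2*r^2)/(r^2*s)) • e 2 + (2/r) • e 3)
    (hT2 : T (e 2) = -(2*(s^2 + 2*r^2)/(r^2*s)) • e 1 + (2/r) • e 4)
    (hT3 : T (e 3) = -(2/r) • e 1 + (4/s) • e 4)
    (hT4 : T (e 4) = -(2/r) • e 2 - (4/s) • e 3) :
    (∀ u v w : V5, lb u (lb v w) + lb v (lb w u) + lb w (lb u v) = 0) ∧
    (∀ u v : V5, ⟪T u, v⟫ = -⟪u, T v⟫) ∧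
    (e 0 : V5) ≠ 0 ∧
    (∀ u v w : V5,
      ⟪D u (T v) - T (D u v), w⟫ + ⟪D v (T u) - T (D v u), w⟫
        = 2 * ⟪u, v⟫ * ⟪e 0, w⟫ - ⟪v, w⟫ * ⟪e 0, u⟫ - ⟪u, w⟫ * ⟪e 0, v⟫) := by
  obtain rfl := eq_grsBracket hanti hb1 hb2 hb3 hb4 hb5 hb6 hb7 hb8 hb9 hb10
  have hT (u : V5) : T u = grsTensor r s u := eq_grsTensor hT0 hT1 hT2 hT3 hT4 u
  have hskew (u v : V5) : ⟪T u, v⟫ = -⟪u, T v⟫ := by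
    rw [hT, hT]
    exact inner_grsTensor_left r s u v
  refine ⟨grsBracket_jacobi _ _ _, hskew, by simp, fun u v w => ?_⟩
  have key := koszulForm_grsBracket_grsTensor hr.ne' hs.ne' u v w
  simp only [← hT] at key
  linarith [two_mul_inner_covDeriv_eq_koszulForm hD hskew u v w,
    two_mul_inner_covDeriv_eq_koszulForm hD hskew v u w]
end

section
/- For r,s > 0 let g_{r,s} be the 5-dimensional metric Lie algebra with orthonormal basis {ξ, z₁, z₂, x, y} and brackets [ξ,x] = r z₁ + a₄ y, [ξ,y] = r z₂ − a₄ x, [x,y] = s ξ with a₄ = (s²−r²)/s. If φ : g_{r,s} → g_{r',s'} is an isometric Lie algebra isomorphism (r,s,r',s' > 0), then r = r' and s = s'. -/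
/-! The centre of `g_{r,s}` is `span {z₁, z₂}`, and a bracket of two vectors of `span {ξ, x, y}`
that stays in `span {ξ, x, y}` is a multiple of `ξ`. An isometric isomorphism `φ` preserves the
centre and hence its orthogonal complement, so `φ ξ = s⁻¹ [φ x, φ y]` is `±ξ` and `φ` maps
`span {x, y}` onto itself. Comparing lengths in `s φ ξ = [φ x, φ y]` gives `s = s'`, and comparing
the central components of `φ [ξ, x] = [φ ξ, φ x]` gives `r = r'`. -/

open scoped RealInnerProductSpace

lemma eq_sum_smul_e (v : V5) : v = v 0 • e 0 + v 1 • e 1 + v 2 • e 2 + v 3 • e 3 + v 4 • e 4 := by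
  ext j; fin_cases j <;> simp

lemma inner_eq_sum (u v : V5) :
    ⟪u, v⟫ = u 0 * v 0 + u 1 * v 1 + u 2 * v 2 + u 3 * v 3 + u 4 * v 4 := by
  simp [PiLp.inner_apply, Fin.sum_univ_five, mul_comm]

lemma inner_e_e (i j : Fin 5) : ⟪e i, e j⟫ = if i = j then 1 else 0 := by
  simp [EuclideanSpace.inner_single_left, PiLp.single_apply]

lemma sq_mul_sub_mul_eq_one {a b c d : ℝ} (h₁ : a * a + b * b = 1) (h₂ : c * c + d * d = 1)
    (h₃ : a * c + b * d = 0) : (a * d - b * c) ^ 2 = 1 := by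
  linear_combination (c * c + d * d) * h₁ + h₂ - (a * c + b * d) * h₃

structure IsGrsBracket (r s : ℝ) (lb : V5 →ₗ[ℝ] V5 →ₗ[ℝ] V5) : Prop where
  isAlt : lb.IsAlt
  e03 : lb (e 0) (e 3) = r • e 1 + ((s ^ 2 - r ^ 2) / s) • e 4
  e04 : lb (e 0) (e 4) = r • e 2 - ((s ^ 2 - r ^ 2) / s) • e 3
  e34 : lb (e 3) (e 4) = s • e 0
  e01 : lb (e 0) (e 1) = 0
  e02 : lb (e 0) (e 2) = 0
  e12 : lb (e 1) (e 2) = 0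
  e13 : lb (e 1) (e 3) = 0
  e14 : lb (e 1) (e 4) = 0
  e23 : lb (e 2) (e 3) = 0
  e24 : lb (e 2) (e 4) = 0

def IsCentral {R M : Type*} [CommSemiring R] [AddCommMonoid M] [Module R M] (lb : M →ₗ[R] M →ₗ[R] M)
    (u : M) : Prop :=
  ∀ v, lb u v = 0

lemma IsCentral.map {R M N : Type*} [CommSemiring R] [AddCommMonoid M] [Module R M]
    [AddCommMonoid N] [Module R N] {lb : M →ₗ[R] M →ₗ[R] M} {lb' : N →ₗ[R] N →ₗ[R] N}
    {u : M} (hu : IsCentral lb u) (φ : M ≃ₗ[R] N) (hφ : ∀ u v, φ (lb u v) = lb' (φ u) (φ v)) :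
    IsCentral lb' (φ u) := by
  intro v
  rw [← φ.apply_symm_apply v, ← hφ, hu, map_zero]

lemma IsCentral.of_map {R M N : Type*} [CommSemiring R] [AddCommMonoid M] [Module R M]
    [AddCommMonoid N] [Module R N] {lb : M →ₗ[R] M →ₗ[R] M} {lb' : N →ₗ[R] N →ₗ[R] N}
    (φ : M ≃ₗ[R] N) (hφ : ∀ u v, φ (lb u v) = lb' (φ u) (φ v)) {u : M}
    (hu : IsCentral lb' (φ u)) : IsCentral lb u := by
  intro v
  apply φ.injective
  rw [hφ, hu, map_zero]

namespace IsGrsBracket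

variable {r s r' s' : ℝ} {lb lb' : V5 →ₗ[ℝ] V5 →ₗ[ℝ] V5}

lemma apply (h : IsGrsBracket r s lb) (u v : V5) :
    lb u v = (u 0 * v 3 - u 3 * v 0) • lb (e 0) (e 3) + (u 0 * v 4 - u 4 * v 0) • lb (e 0) (e 4)
      + (u 3 * v 4 - u 4 * v 3) • lb (e 3) (e 4) := by
  have swap (x y : V5) : lb y x = -lb x y := (h.isAlt.neg x y).symm
  conv_lhs => rw [eq_sum_smul_e u, eq_sum_smul_e v]
  simp only [map_add, map_smul, LinearMap.add_apply, LinearMap.smul_apply, h.isAlt.self_eq_zero,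
    swap (e 0), swap (e 1) (e 2), swap (e 1) (e 3), swap (e 1) (e 4), swap (e 2) (e 3),
    swap (e 2) (e 4), swap (e 3) (e 4), h.e01, h.e02, h.e12, h.e13, h.e14, h.e23, h.e24]
  module

lemma apply_zero (h : IsGrsBracket r s lb) (u v : V5) :
    lb u v 0 = s * (u 3 * v 4 - u 4 * v 3) := by
  rw [h.apply, h.e03, h.e04, h.e34]
  simp only [PiLp.add_apply, PiLp.sub_apply, PiLp.smul_apply, smul_eq_mul, PiLp.single_apply,
    Fin.reduceEq, ↓reduceIte]
  ring

lemma apply_one (h : IsGrsBracket r s lb) (u v : V5) :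
    lb u v 1 = r * (u 0 * v 3 - u 3 * v 0) := by
  rw [h.apply, h.e03, h.e04, h.e34]
  simp only [PiLp.add_apply, PiLp.sub_apply, PiLp.smul_apply, smul_eq_mul, PiLp.single_apply,
    Fin.reduceEq, ↓reduceIte]
  ring

lemma apply_two (h : IsGrsBracket r s lb) (u v : V5) :
    lb u v 2 = r * (u 0 * v 4 - u 4 * v 0) := by
  rw [h.apply, h.e03, h.e04, h.e34]
  simp only [PiLp.add_apply, PiLp.sub_apply, PiLp.smul_apply, smul_eq_mul, PiLp.single_apply,
    Fin.reduceEq, ↓reduceIte]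
  ring

lemma isCentral_e_one (h : IsGrsBracket r s lb) : IsCentral lb (e 1) := by
  intro v; rw [h.apply]; simp

lemma isCentral_e_two (h : IsGrsBracket r s lb) : IsCentral lb (e 2) := by
  intro v; rw [h.apply]; simp

lemma eq_zero_of_isCentral (h : IsGrsBracket r s lb) (hr : r ≠ 0) (hs : s ≠ 0) {u : V5}
    (hu : IsCentral lb u) : u 0 = 0 ∧ u 3 = 0 ∧ u 4 = 0 := by
  refine ⟨?_, ?_, ?_⟩
  · simpa [hu _, hr] using (h.apply_one u (e 3)).symm
  · simpa [hu _, hs] using (h.apply_zero u (e 4)).symm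
  · simpa [hu _, hs] using (h.apply_zero u (e 3)).symm

lemma apply_eq_smul_e_zero (h : IsGrsBracket r s lb) (hr : r ≠ 0) {u v : V5}
    (h1 : lb u v 1 = 0) (h2 : lb u v 2 = 0) : lb u v = (s * (u 3 * v 4 - u 4 * v 3)) • e 0 := by
  rw [h.apply_one] at h1
  rw [h.apply_two] at h2
  rw [h.apply, mul_eq_zero.1 h1 |>.resolve_left hr, mul_eq_zero.1 h2 |>.resolve_left hr, h.e34]
  simp [smul_smul, mul_comm]

lemma map_apply_eq_zero (h : IsGrsBracket r s lb) (hr : r ≠ 0) (hs : s ≠ 0) (φ : V5 ≃ₗᵢ[ℝ] V5)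
    (hφ : ∀ u v, φ (lb u v) = lb' (φ u) (φ v)) {j : Fin 5} (hj : IsCentral lb' (e j)) {u : V5}
    (hu1 : u 1 = 0) (hu2 : u 2 = 0) : φ u j = 0 := by
  have hc : IsCentral lb (φ.symm (e j)) :=
    IsCentral.of_map φ.toLinearEquiv hφ (by simpa using hj)
  obtain ⟨h0, h3, h4⟩ := h.eq_zero_of_isCentral hr hs hc
  calc φ u j = ⟪e j, φ u⟫ := by simp [EuclideanSpace.inner_single_left]
    _ = ⟪φ.symm (e j), u⟫ := by rw [real_inner_comm, φ.inner_map_eq_flip, real_inner_comm]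
    _ = 0 := by rw [inner_eq_sum, h0, h3, h4, hu1, hu2]; ring

lemma map_e_apply_eq_zero (h : IsGrsBracket r s lb) (h' : IsGrsBracket r' s' lb') (hr : r ≠ 0)
    (hs : s ≠ 0) (φ : V5 ≃ₗᵢ[ℝ] V5) (hφ : ∀ u v, φ (lb u v) = lb' (φ u) (φ v)) (i j : Fin 5)
    (hi : i = 0 ∨ i = 3 ∨ i = 4) (hj : j = 1 ∨ j = 2) : φ (e i) j = 0 := by
  have hcj : IsCentral lb' (e j) := by
    rcases hj with rfl | rfl
    exacts [h'.isCentral_e_one, h'.isCentral_e_two]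
  apply h.map_apply_eq_zero hr hs φ hφ hcj <;> rcases hi with rfl | rfl | rfl <;> simp

lemma map_e_zero_eq (h : IsGrsBracket r s lb) (h' : IsGrsBracket r' s' lb') (hr : r ≠ 0)
    (hs : s ≠ 0) (hr' : r' ≠ 0) (φ : V5 ≃ₗᵢ[ℝ] V5) (hφ : ∀ u v, φ (lb u v) = lb' (φ u) (φ v)) :
    φ (e 0) = (s' * (φ (e 3) 3 * φ (e 4) 4 - φ (e 3) 4 * φ (e 4) 3) / s) • e 0 := by
  have key : s • φ (e 0) = lb' (φ (e 3)) (φ (e 4)) := by rw [← hφ, h.e34, map_smul]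
  have h1 : lb' (φ (e 3)) (φ (e 4)) 1 = 0 := by
    simp [← key, h.map_e_apply_eq_zero h' hr hs φ hφ]
  have h2 : lb' (φ (e 3)) (φ (e 4)) 2 = 0 := by
    simp [← key, h.map_e_apply_eq_zero h' hr hs φ hφ]
  rw [h'.apply_eq_smul_e_zero hr' h1 h2] at key
  rw [← inv_smul_smul₀ hs (φ (e 0)), key, smul_smul, inv_mul_eq_div]

lemma inner_map_e_e (φ : V5 ≃ₗᵢ[ℝ] V5) (i j : Fin 5) :
    ⟪φ (e i), φ (e j)⟫ = if i = j then 1 else 0 := by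
  rw [φ.inner_map_map, inner_e_e]

lemma map_e_apply_eq_zero_of_eq_smul (φ : V5 ≃ₗᵢ[ℝ] V5) {k : Fin 5} {c : ℝ} (hc : c ≠ 0)
    (hk : φ (e k) = c • e k) {i : Fin 5} (hi : i ≠ k) : φ (e i) k = 0 := by
  have := inner_map_e_e φ k i
  rw [hk, real_inner_smul_left, EuclideanSpace.inner_single_left, if_neg hi.symm] at this
  simpa [hc] using this

lemma exists_map_e_zero_eq_smul (h : IsGrsBracket r s lb) (h' : IsGrsBracket r' s' lb')
    (hr : r ≠ 0) (hs : s ≠ 0) (hr' : r' ≠ 0) (φ : V5 ≃ₗᵢ[ℝ] V5)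
    (hφ : ∀ u v, φ (lb u v) = lb' (φ u) (φ v)) :
    ∃ c : ℝ, c ^ 2 = 1 ∧ c * s = s' * (φ (e 3) 3 * φ (e 4) 4 - φ (e 3) 4 * φ (e 4) 3) ∧
      φ (e 0) = c • e 0 := by
  refine ⟨_, ?_, div_mul_cancel₀ _ hs, h.map_e_zero_eq h' hr hs hr' φ hφ⟩
  have := inner_map_e_e φ 0 0
  rw [h.map_e_zero_eq h' hr hs hr' φ hφ, real_inner_smul_left, real_inner_smul_right,
    inner_e_e] at this
  simpa [sq] using this

lemma sq_eq_sq_of_isometry (h : IsGrsBracket r s lb) (h' : IsGrsBracket r' s' lb')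
    (hr : r ≠ 0) (hs : s ≠ 0) (hr' : r' ≠ 0) (hs' : s' ≠ 0) (φ : V5 ≃ₗᵢ[ℝ] V5)
    (hφ : ∀ u v, φ (lb u v) = lb' (φ u) (φ v)) : r ^ 2 = r' ^ 2 ∧ s ^ 2 = s' ^ 2 := by
  obtain ⟨c, hc, hcs, hP⟩ := h.exists_map_e_zero_eq_smul h' hr hs hr' φ hφ
  have hc0 : c ≠ 0 := by rintro rfl; norm_num at hc
  have hX0 : φ (e 3) 0 = 0 := map_e_apply_eq_zero_of_eq_smul φ hc0 hP (by decide)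
  have hY0 : φ (e 4) 0 = 0 := map_e_apply_eq_zero_of_eq_smul φ hc0 hP (by decide)
  have hperp := h.map_e_apply_eq_zero h' hr hs φ hφ
  obtain ⟨z0, z3, z4⟩ : φ (e 1) 0 = 0 ∧ φ (e 1) 3 = 0 ∧ φ (e 1) 4 = 0 :=
    h'.eq_zero_of_isCentral hr' hs' (h.isCentral_e_one.map φ.toLinearEquiv hφ)
  have orth (i j : Fin 5) := (inner_eq_sum _ _).symm.trans (inner_map_e_e φ i j)
  have hZ : φ (e 1) 1 * φ (e 1) 1 + φ (e 1) 2 * φ (e 1) 2 = 1 := by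
    simpa [z0, z3, z4] using orth 1 1
  have hX : φ (e 3) 3 * φ (e 3) 3 + φ (e 3) 4 * φ (e 3) 4 = 1 := by
    simpa [hperp, hX0] using orth 3 3
  have hY : φ (e 4) 3 * φ (e 4) 3 + φ (e 4) 4 * φ (e 4) 4 = 1 := by
    simpa [hperp, hY0] using orth 4 4
  have hXY : φ (e 3) 3 * φ (e 4) 3 + φ (e 3) 4 * φ (e 4) 4 = 0 := by
    simpa [hperp, hX0, hY0] using orth 3 4
  have hb1 : r * φ (e 1) 1 = c * (r' * φ (e 3) 3) := by
    simpa [h.e03, h'.apply_one, hP, hperp, hX0] using congrArg (· 1) (hφ (e 0) (e 3))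
  have hb2 : r * φ (e 1) 2 = c * (r' * φ (e 3) 4) := by
    simpa [h.e03, h'.apply_two, hP, hperp, hX0] using congrArg (· 2) (hφ (e 0) (e 3))
  constructor
  · linear_combination (-r ^ 2) * hZ + (r * φ (e 1) 1 + r' * c * φ (e 3) 3) * hb1
      + (r * φ (e 1) 2 + r' * c * φ (e 3) 4) * hb2 + r' ^ 2 * c ^ 2 * hX + r' ^ 2 * hc
  · linear_combination (-s ^ 2) * hc
      + (c * s + s' * (φ (e 3) 3 * φ (e 4) 4 - φ (e 3) 4 * φ (e 4) 3)) * hcs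
      + s' ^ 2 * sq_mul_sub_mul_eq_one hX hY hXY

end IsGrsBracket

theorem grs_pairwise_nonisometric_general
    (r s r' s' : ℝ) (hr : 0 < r) (hs : 0 < s) (hr' : 0 < r') (hs' : 0 < s')
    (lb lb' : V5 →ₗ[ℝ] V5 →ₗ[ℝ] V5)
    (hanti : ∀ u : V5, lb u u = 0)
    (hb1 : lb (e 0) (e 3) = r • e 1 + ((s^2 - r^2)/s) • e 4)
    (hb2 : lb (e 0) (e 4) = r • e 2 - ((s^2 - r^2)/s) • e 3)
    (hb3 : lb (e 3) (e 4) = s • e 0)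
    (hb4 : lb (e 0) (e 1) = 0) (hb5 : lb (e 0) (e 2) = 0)
    (hb6 : lb (e 1) (e 2) = 0) (hb7 : lb (e 1) (e 3) = 0)
    (hb8 : lb (e 1) (e 4) = 0) (hb9 : lb (e 2) (e 3) = 0)
    (hb10 : lb (e 2) (e 4) = 0)
    (hanti' : ∀ u : V5, lb' u u = 0)
    (hb1' : lb' (e 0) (e 3) = r' • e 1 + ((s'^2 - r'^2)/s') • e 4)
    (hb2' : lb' (e 0) (e 4) = r' • e 2 - ((s'^2 - r'^2)/s') • e 3)
    (hb3' : lb' (e 3) (e 4) = s' • e 0)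
    (hb4' : lb' (e 0) (e 1) = 0) (hb5' : lb' (e 0) (e 2) = 0)
    (hb6' : lb' (e 1) (e 2) = 0) (hb7' : lb' (e 1) (e 3) = 0)
    (hb8' : lb' (e 1) (e 4) = 0) (hb9' : lb' (e 2) (e 3) = 0)
    (hb10' : lb' (e 2) (e 4) = 0)
    (φ : V5 ≃ₗ[ℝ] V5)
    (hφiso : ∀ u v : V5, ⟪φ u, φ v⟫ = ⟪u, v⟫)
    (hφbr : ∀ u v : V5, φ (lb u v) = lb' (φ u) (φ v)) :
    r = r' ∧ s = s' := by
  have hg : IsGrsBracket r s lb := ⟨hanti, hb1, hb2, hb3, hb4, hb5, hb6, hb7, hb8, hb9, hb10⟩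
  have hg' : IsGrsBracket r' s' lb' :=
    ⟨hanti', hb1', hb2', hb3', hb4', hb5', hb6', hb7', hb8', hb9', hb10'⟩
  obtain ⟨hr2, hs2⟩ :=
    hg.sq_eq_sq_of_isometry hg' hr.ne' hs.ne' hr'.ne' hs'.ne' (φ.isometryOfInner hφiso) hφbr
  exact ⟨(pow_left_inj₀ hr.le hr'.le two_ne_zero).1 hr2,
    (pow_left_inj₀ hs.le hs'.le two_ne_zero).1 hs2⟩

/-- the metric Lie algebras `g_{r,s}` are pairwise
non-isometrically-isomorphic: if `φ : g_{r,s} → g_{r',s'}` is an isometric Lie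
algebra isomorphism, then `r = r'` and `s = s'`. -/
theorem grs_pairwise_nonisometric
    (r s r' s' : ℝ) (hr : 0 < r) (hs : 0 < s) (hr' : 0 < r') (hs' : 0 < s')
    (lb lb' : V5 →ₗ[ℝ] V5 →ₗ[ℝ] V5)
    (hanti : ∀ u : V5, lb u u = 0)
    (hjac : ∀ u v w : V5, lb u (lb v w) + lb v (lb w u) + lb w (lb u v) = 0)
    (hb1 : lb (e 0) (e 3) = r • e 1 + ((s^2 - r^2)/s) • e 4)
    (hb2 : lb (e 0) (e 4) = r • e 2 - ((s^2 - r^2)/s) • e 3)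
    (hb3 : lb (e 3) (e 4) = s • e 0)
    (hb4 : lb (e 0) (e 1) = 0) (hb5 : lb (e 0) (e 2) = 0)
    (hb6 : lb (e 1) (e 2) = 0) (hb7 : lb (e 1) (e 3) = 0)
    (hb8 : lb (e 1) (e 4) = 0) (hb9 : lb (e 2) (e 3) = 0)
    (hb10 : lb (e 2) (e 4) = 0)
    (hanti' : ∀ u : V5, lb' u u = 0)
    (hjac' : ∀ u v w : V5, lb' u (lb' v w) + lb' v (lb' w u) + lb' w (lb' u v) = 0)
    (hb1' : lb' (e 0) (e 3) = r' • e 1 + ((s'^2 - r'^2)/s') • e 4)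
    (hb2' : lb' (e 0) (e 4) = r' • e 2 - ((s'^2 - r'^2)/s') • e 3)
    (hb3' : lb' (e 3) (e 4) = s' • e 0)
    (hb4' : lb' (e 0) (e 1) = 0) (hb5' : lb' (e 0) (e 2) = 0)
    (hb6' : lb' (e 1) (e 2) = 0) (hb7' : lb' (e 1) (e 3) = 0)
    (hb8' : lb' (e 1) (e 4) = 0) (hb9' : lb' (e 2) (e 3) = 0)
    (hb10' : lb' (e 2) (e 4) = 0)
    (φ : V5 ≃ₗ[ℝ] V5)
    (hφiso : ∀ u v : V5, ⟪φ u, φ v⟫ = ⟪u, v⟫)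
    (hφbr : ∀ u v : V5, φ (lb u v) = lb' (φ u) (φ v)) :
    r = r' ∧ s = s' :=
  grs_pairwise_nonisometric_general r s r' s' hr hs hr' hs' lb lb' hanti hb1 hb2 hb3 hb4 hb5 hb6 hb7
    hb8 hb9 hb10 hanti' hb1' hb2' hb3' hb4' hb5' hb6' hb7' hb8' hb9' hb10' φ hφiso hφbr
end

section
/- For r,s > 0 with r ≠ s, let g_{r,s} be the 5-dimensional Lie algebra with basis {ξ, z₁, z₂, x, y} and brackets [ξ,x] = r z₁ + a₄ y, [ξ,y] = r z₂ − a₄ x, [x,y] = s ξ, a₄ = (s²−r²)/s. If s > r then g_{r,s} is isomorphic as a Lie algebra to ℝ² × su(2), and if s < r then g_{r,s} is isomorphic to ℝ² × sl(2,ℝ). -/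
open scoped RealInnerProductSpace

/-!
Put `a = (s² - r²)/s`. As `z₁, z₂` are central, the vectors `x' = x - (r/a) z₂` and
`y' = y + (r/a) z₁` satisfy `[ξ, x'] = a y'`, `[ξ, y'] = -a x'` and `[x', y'] = s ξ`. Hence
`ξ / a, z₁, z₂, x' / β, y' / β` with `ε β² = s a` is a basis with the brackets of `ℝ² × su(2)`
for `ε = 1` and of `ℝ² × sl(2,ℝ)` for `ε = -1`; such a `β` exists for the sign `ε` of `s a`,
which is the sign of `s - r`.
-/

theorem LinearMap.IsAlt.map_apply_apply_of_basis_lt {R M N ι : Type*} [CommRing R]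
    [AddCommGroup M] [Module R M] [AddCommGroup N] [Module R N] [LinearOrder ι]
    {A : M →ₗ[R] M →ₗ[R] M} {B : N →ₗ[R] N →ₗ[R] N} (hA : A.IsAlt) (hB : B.IsAlt)
    (b : Module.Basis ι R M) (f : M →ₗ[R] N)
    (h : ∀ i j, i < j → f (A (b i) (b j)) = B (f (b i)) (f (b j))) (u v : M) :
    f (A u v) = B (f u) (f v) := by
  have hcomp : A.compr₂ f = B.compl₁₂ f f := LinearMap.ext_basis b b fun i j => by
    rcases lt_trichotomy i j with hij | rfl | hji
    · exact h i j hij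
    · simp [hA.self_eq_zero, hB.self_eq_zero]
    · simp [← hA.neg (b j), ← hB.neg (f (b j)), h j i hji]
  exact LinearMap.congr_fun₂ hcomp u v

noncomputable def stdBasis : Module.Basis (Fin 5) ℝ V5 :=
  (EuclideanSpace.basisFun (Fin 5) ℝ).toBasis

theorem stdBasis_apply (i : Fin 5) : stdBasis i = e i := by
  simp [stdBasis]

theorem stdBasis_constr_e (F : Fin 5 → V5) (i : Fin 5) : stdBasis.constr ℝ F (e i) = F i := by
  rw [← stdBasis_apply, Module.Basis.constr_basis]

noncomputable def shearScaleEquiv (a β c : ℝ) (ha : a ≠ 0) (hβ : β ≠ 0) : V5 ≃ₗ[ℝ] V5 :=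
  LinearEquiv.ofLinearMap
    (stdBasis.constr ℝ ![a • e 0, e 1, e 2, β • e 3 + c • e 2, β • e 4 - c • e 1])
    (stdBasis.constr ℝ ![a⁻¹ • e 0, e 1, e 2, β⁻¹ • (e 3 - c • e 2), β⁻¹ • (e 4 + c • e 1)])
    (stdBasis.ext fun i => by
      fin_cases i <;>
        simp [-Module.Basis.constr_apply_fintype, stdBasis_apply, stdBasis_constr_e, smul_smul,
          smul_add, smul_sub, ha, hβ])
    (stdBasis.ext fun i => by
      fin_cases i <;>
        simp [-Module.Basis.constr_apply_fintype, stdBasis_apply, stdBasis_constr_e, smul_smul,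
          smul_add, smul_sub, ha, hβ])

theorem shearScaleEquiv_e (a β c : ℝ) (ha : a ≠ 0) (hβ : β ≠ 0) (i : Fin 5) :
    shearScaleEquiv a β c ha hβ (e i) =
      ![a • e 0, e 1, e 2, β • e 3 + c • e 2, β • e 4 - c • e 1] i :=
  stdBasis_constr_e _ i

theorem exists_equiv_map_bracket_of_mul_sq_eq (r s a β ε : ℝ) (hβ : ε * β ^ 2 = s * a)
    (hsa : s * a ≠ 0)
    (lb : V5 →ₗ[ℝ] V5 →ₗ[ℝ] V5) (hanti : lb.IsAlt)
    (hb1 : lb (e 0) (e 3) = r • e 1 + a • e 4)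
    (hb2 : lb (e 0) (e 4) = r • e 2 - a • e 3)
    (hb3 : lb (e 3) (e 4) = s • e 0)
    (hb4 : lb (e 0) (e 1) = 0) (hb5 : lb (e 0) (e 2) = 0)
    (hb6 : lb (e 1) (e 2) = 0) (hb7 : lb (e 1) (e 3) = 0)
    (hb8 : lb (e 1) (e 4) = 0) (hb9 : lb (e 2) (e 3) = 0)
    (hb10 : lb (e 2) (e 4) = 0)
    (lbT : V5 →ₗ[ℝ] V5 →ₗ[ℝ] V5) (hTanti : lbT.IsAlt)
    (hT1 : lbT (e 0) (e 3) = e 4) (hT2 : lbT (e 3) (e 4) = ε • e 0)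
    (hT3 : lbT (e 4) (e 0) = e 3)
    (hT4 : lbT (e 0) (e 1) = 0) (hT5 : lbT (e 0) (e 2) = 0)
    (hT6 : lbT (e 1) (e 2) = 0) (hT7 : lbT (e 1) (e 3) = 0)
    (hT8 : lbT (e 1) (e 4) = 0) (hT9 : lbT (e 2) (e 3) = 0)
    (hT10 : lbT (e 2) (e 4) = 0) :
    ∃ φ : V5 ≃ₗ[ℝ] V5, ∀ u v : V5, φ (lb u v) = lbT (φ u) (φ v) := by
  have ha : a ≠ 0 := right_ne_zero_of_mul hsa
  have hβ0 : β ≠ 0 := by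
    rintro rfl
    exact hsa (by simpa using hβ.symm)
  have hT3' : lbT (e 0) (e 4) = -e 3 := by rw [← hTanti.neg, hT3]
  have hT6' : lbT (e 2) (e 1) = 0 := by rw [← hTanti.neg, hT6, neg_zero]
  have hT7' : lbT (e 3) (e 1) = 0 := by rw [← hTanti.neg, hT7, neg_zero]
  -- sends `ξ / a, z₁, z₂, x' / β, y' / β` to the standard basis
  refine ⟨shearScaleEquiv a β (r / a) ha hβ0,
    hanti.map_apply_apply_of_basis_lt hTanti stdBasis _ fun i j hij => ?_⟩
  fin_cases i <;> fin_cases j <;> simp at hij <;>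
    simp [stdBasis_apply, shearScaleEquiv_e, hb1, hb2, hb3, hb4, hb5, hb6, hb7, hb8, hb9, hb10,
      hT1, hT2, hT3', hT4, hT5, hT6, hT7, hT8, hT9, hT10, hT6', hT7', hTanti.self_eq_zero,
      smul_sub, smul_smul, mul_div_cancel₀ r ha]
  linear_combination -hβ

theorem grs_isomorphism_type_general
    (r s : ℝ) (hr : 0 < r) (hs : 0 < s)
    (lb : V5 →ₗ[ℝ] V5 →ₗ[ℝ] V5)
    (hanti : ∀ u : V5, lb u u = 0)
    (hb1 : lb (e 0) (e 3) = r • e 1 + ((s^2 - r^2)/s) • e 4)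
    (hb2 : lb (e 0) (e 4) = r • e 2 - ((s^2 - r^2)/s) • e 3)
    (hb3 : lb (e 3) (e 4) = s • e 0)
    (hb4 : lb (e 0) (e 1) = 0) (hb5 : lb (e 0) (e 2) = 0)
    (hb6 : lb (e 1) (e 2) = 0) (hb7 : lb (e 1) (e 3) = 0)
    (hb8 : lb (e 1) (e 4) = 0) (hb9 : lb (e 2) (e 3) = 0)
    (hb10 : lb (e 2) (e 4) = 0)
    -- ℝ² × su(2) : basis {E, Z₁, Z₂, X, Y}, [E,X]=Y, [X,Y]=E, [Y,E]=X, Z's central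
    (lbsu : V5 →ₗ[ℝ] V5 →ₗ[ℝ] V5)
    (hsuanti : ∀ u : V5, lbsu u u = 0)
    (hsu1 : lbsu (e 0) (e 3) = e 4) (hsu2 : lbsu (e 3) (e 4) = e 0)
    (hsu3 : lbsu (e 4) (e 0) = e 3)
    (hsu4 : lbsu (e 0) (e 1) = 0) (hsu5 : lbsu (e 0) (e 2) = 0)
    (hsu6 : lbsu (e 1) (e 2) = 0) (hsu7 : lbsu (e 1) (e 3) = 0)
    (hsu8 : lbsu (e 1) (e 4) = 0) (hsu9 : lbsu (e 2) (e 3) = 0)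
    (hsu10 : lbsu (e 2) (e 4) = 0)
    -- ℝ² × sl(2,ℝ) : basis {E, Z₁, Z₂, X, Y}, [E,X]=Y, [X,Y]=−E, [Y,E]=X, Z's central
    (lbsl : V5 →ₗ[ℝ] V5 →ₗ[ℝ] V5)
    (hslanti : ∀ u : V5, lbsl u u = 0)
    (hsl1 : lbsl (e 0) (e 3) = e 4) (hsl2 : lbsl (e 3) (e 4) = -e 0)
    (hsl3 : lbsl (e 4) (e 0) = e 3)
    (hsl4 : lbsl (e 0) (e 1) = 0) (hsl5 : lbsl (e 0) (e 2) = 0)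
    (hsl6 : lbsl (e 1) (e 2) = 0) (hsl7 : lbsl (e 1) (e 3) = 0)
    (hsl8 : lbsl (e 1) (e 4) = 0) (hsl9 : lbsl (e 2) (e 3) = 0)
    (hsl10 : lbsl (e 2) (e 4) = 0) :
    (r < s → ∃ φ : V5 ≃ₗ[ℝ] V5, ∀ u v : V5, φ (lb u v) = lbsu (φ u) (φ v)) ∧
    (s < r → ∃ φ : V5 ≃ₗ[ℝ] V5, ∀ u v : V5, φ (lb u v) = lbsl (φ u) (φ v)) := by
  have hsa : s * ((s ^ 2 - r ^ 2) / s) = s ^ 2 - r ^ 2 := mul_div_cancel₀ _ hs.ne'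
  constructor
  · intro hrs
    have hpos : 0 < s ^ 2 - r ^ 2 := by nlinarith
    exact exists_equiv_map_bracket_of_mul_sq_eq r s _ √(s ^ 2 - r ^ 2) 1
      (by rw [hsa, one_mul, Real.sq_sqrt hpos.le]) (by rw [hsa]; exact hpos.ne')
      lb hanti hb1 hb2 hb3 hb4 hb5 hb6 hb7 hb8 hb9 hb10
      lbsu hsuanti hsu1 (by rw [hsu2, one_smul]) hsu3 hsu4 hsu5 hsu6 hsu7 hsu8 hsu9 hsu10
  · intro hsr
    have hneg : s ^ 2 - r ^ 2 < 0 := by nlinarith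
    exact exists_equiv_map_bracket_of_mul_sq_eq r s _ √(r ^ 2 - s ^ 2) (-1)
      (by rw [hsa, Real.sq_sqrt (by linarith)]; ring) (by rw [hsa]; exact hneg.ne)
      lb hanti hb1 hb2 hb3 hb4 hb5 hb6 hb7 hb8 hb9 hb10
      lbsl hslanti hsl1 (by rw [hsl2, neg_one_smul]) hsl3 hsl4 hsl5 hsl6 hsl7 hsl8 hsl9 hsl10

/-- for `r ≠ s`, the Lie algebra `g_{r,s}` is isomorphic to
`ℝ² × su(2)` if `s > r`, and to `ℝ² × sl(2,ℝ)` if `s < r`. -/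
theorem grs_isomorphism_type
    (r s : ℝ) (hr : 0 < r) (hs : 0 < s) (hrs : r ≠ s)
    (lb : V5 →ₗ[ℝ] V5 →ₗ[ℝ] V5)
    (hanti : ∀ u : V5, lb u u = 0)
    (hjac : ∀ u v w : V5, lb u (lb v w) + lb v (lb w u) + lb w (lb u v) = 0)
    (hb1 : lb (e 0) (e 3) = r • e 1 + ((s^2 - r^2)/s) • e 4)
    (hb2 : lb (e 0) (e 4) = r • e 2 - ((s^2 - r^2)/s) • e 3)
    (hb3 : lb (e 3) (e 4) = s • e 0)
    (hb4 : lb (e 0) (e 1) = 0) (hb5 : lb (e 0) (e 2) = 0)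
    (hb6 : lb (e 1) (e 2) = 0) (hb7 : lb (e 1) (e 3) = 0)
    (hb8 : lb (e 1) (e 4) = 0) (hb9 : lb (e 2) (e 3) = 0)
    (hb10 : lb (e 2) (e 4) = 0)
    -- ℝ² × su(2) : basis {E, Z₁, Z₂, X, Y}, [E,X]=Y, [X,Y]=E, [Y,E]=X, Z's central
    (lbsu : V5 →ₗ[ℝ] V5 →ₗ[ℝ] V5)
    (hsuanti : ∀ u : V5, lbsu u u = 0)
    (hsu1 : lbsu (e 0) (e 3) = e 4) (hsu2 : lbsu (e 3) (e 4) = e 0)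
    (hsu3 : lbsu (e 4) (e 0) = e 3)
    (hsu4 : lbsu (e 0) (e 1) = 0) (hsu5 : lbsu (e 0) (e 2) = 0)
    (hsu6 : lbsu (e 1) (e 2) = 0) (hsu7 : lbsu (e 1) (e 3) = 0)
    (hsu8 : lbsu (e 1) (e 4) = 0) (hsu9 : lbsu (e 2) (e 3) = 0)
    (hsu10 : lbsu (e 2) (e 4) = 0)
    -- ℝ² × sl(2,ℝ) : basis {E, Z₁, Z₂, X, Y}, [E,X]=Y, [X,Y]=−E, [Y,E]=X, Z's central
    (lbsl : V5 →ₗ[ℝ] V5 →ₗ[ℝ] V5)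
    (hslanti : ∀ u : V5, lbsl u u = 0)
    (hsl1 : lbsl (e 0) (e 3) = e 4) (hsl2 : lbsl (e 3) (e 4) = -e 0)
    (hsl3 : lbsl (e 4) (e 0) = e 3)
    (hsl4 : lbsl (e 0) (e 1) = 0) (hsl5 : lbsl (e 0) (e 2) = 0)
    (hsl6 : lbsl (e 1) (e 2) = 0) (hsl7 : lbsl (e 1) (e 3) = 0)
    (hsl8 : lbsl (e 1) (e 4) = 0) (hsl9 : lbsl (e 2) (e 3) = 0)
    (hsl10 : lbsl (e 2) (e 4) = 0) :
    (r < s → ∃ φ : V5 ≃ₗ[ℝ] V5, ∀ u v : V5, φ (lb u v) = lbsu (φ u) (φ v)) ∧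
    (s < r → ∃ φ : V5 ≃ₗ[ℝ] V5, ∀ u v : V5, φ (lb u v) = lbsl (φ u) (φ v)) :=
  grs_isomorphism_type_general r s hr hs lb hanti hb1 hb2 hb3 hb4 hb5 hb6 hb7 hb8 hb9 hb10 lbsu
    hsuanti hsu1 hsu2 hsu3 hsu4 hsu5 hsu6 hsu7 hsu8 hsu9 hsu10 lbsl hslanti hsl1 hsl2 hsl3 hsl4 hsl5
    hsl6 hsl7 hsl8 hsl9 hsl10
end

section
/- Let (g, ⟨·,·⟩) be a 5-dimensional metric Lie algebra with center of dimension at least 2 admitting a strict CKY 2-form ω. Then ω is never closed; more specifically, in the normal form g_{r,s} with orthonormal basis {ξ, z₁, z₂, x, y} and brackets [ξ,x] = r z₁ + a₄y, [ξ,y] = r z₂ − a₄x, [x,y] = sξ, the exterior derivative satisfies dω(x, z₂, ξ) = −6r/s ≠ 0, where ω is the strict CKY 2-form from equation ω = (2(s²+2r²)/(r²s)) z¹∧z² + (2/r)(z¹∧x* + z²∧y*) + (4/s) x*∧y*. -/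
open scoped RealInnerProductSpace

/-!
Since `z₂` is central, the formula for `dω` collapses to the single term
`dω(x, z₂, ξ) = -ω([ξ, x], z₂)`, and `[ξ, x] = r z₁ + a₄ y` gives
`ω([ξ, x], z₂) = r ω(z₁, z₂) + a₄ ω(y, z₂) = 2(s² + 2r²)/(rs) - 2(s² - r²)/(rs) = 6r/s`.
-/

section TwoFormDeriv

variable {E : Type*} [NormedAddCommGroup E] [InnerProductSpace ℝ E]

/-- `dω` for the left-invariant 2-form `ω(u, v) = ⟪T u, v⟫` and the bracket `lb`. -/
def twoFormDeriv (lb : E →ₗ[ℝ] E →ₗ[ℝ] E) (T : E →ₗ[ℝ] E) (u v w : E) : ℝ :=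
  -⟪T (lb u v), w⟫ + ⟪T (lb u w), v⟫ - ⟪T (lb v w), u⟫

theorem twoFormDeriv_of_lb_eq_zero {lb : E →ₗ[ℝ] E →ₗ[ℝ] E} (hlb : lb.IsAlt) (T : E →ₗ[ℝ] E)
    {u v w : E} (huv : lb u v = 0) (hvw : lb v w = 0) :
    twoFormDeriv lb T u v w = -⟪T (lb w u), v⟫ := by
  rw [twoFormDeriv, huv, hvw, ← hlb.neg w u]
  simp only [map_zero, map_neg, inner_zero_left, inner_neg_left]
  ring

end TwoFormDeriv

theorem inner_e (i j : Fin 5) : ⟪e i, e j⟫ = if i = j then (1 : ℝ) else 0 := by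
  simp [EuclideanSpace.inner_single_left]

theorem inner_cky_apply_bracket_xi_x {r s : ℝ} (hr : r ≠ 0) (hs : s ≠ 0) (T : V5 →ₗ[ℝ] V5)
    (hT1 : T (e 1) = (2*(s^2 + 2*r^2)/(r^2*s)) • e 2 + (2/r) • e 3)
    (hT4 : T (e 4) = -(2/r) • e 2 - (4/s) • e 3) :
    ⟪T (r • e 1 + ((s^2 - r^2)/s) • e 4), e 2⟫ = 6 * r / s := by
  simp only [map_add, map_smul, hT1, hT4, inner_add_left, inner_sub_left, inner_smul_left,
    inner_e, conj_trivial, Fin.reduceEq, if_true, if_false, mul_one, mul_zero]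
  field_simp
  ring

theorem grs_cky_form_never_closed_general
    (r s : ℝ) (hr : 0 < r) (hs : 0 < s)
    (lb : V5 →ₗ[ℝ] V5 →ₗ[ℝ] V5)
    (hanti : ∀ u : V5, lb u u = 0)
    (hb1 : lb (e 0) (e 3) = r • e 1 + ((s^2 - r^2)/s) • e 4)
    (hb5 : lb (e 0) (e 2) = 0)
    (hb9 : lb (e 2) (e 3) = 0)
    -- the tensor of the strict CKY 2-form ω
    (T : V5 →ₗ[ℝ] V5)
    (hT1 : T (e 1) = (2*(s^2 + 2*r^2)/(r^2*s)) • e 2 + (2/r) • e 3)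
    (hT4 : T (e 4) = -(2/r) • e 2 - (4/s) • e 3) :
    (¬ ∀ u v w : V5,
      -⟪T (lb u v), w⟫ + ⟪T (lb u w), v⟫ - ⟪T (lb v w), u⟫ = 0) ∧
    (-⟪T (lb (e 3) (e 2)), e 0⟫ + ⟪T (lb (e 3) (e 0)), e 2⟫ - ⟪T (lb (e 2) (e 0)), e 3⟫
      = -6 * r / s) ∧
    (-6 * r / s : ℝ) ≠ 0 := by
  have hlb : lb.IsAlt := hanti
  have hval : twoFormDeriv lb T (e 3) (e 2) (e 0) = -6 * r / s := by
    rw [twoFormDeriv_of_lb_eq_zero hlb T (hlb.eq_iff.mp hb9) (hlb.eq_iff.mp hb5), hb1,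
      inner_cky_apply_bracket_xi_x hr.ne' hs.ne' T hT1 hT4, neg_mul, neg_div]
  have hne : (-6 * r / s : ℝ) ≠ 0 := by
    have : 0 < 6 * r / s := by positivity
    rw [neg_mul, neg_div]
    exact neg_ne_zero.mpr this.ne'
  exact ⟨fun hclosed => hne (hval ▸ hclosed _ _ _), hval, hne⟩

/-- the strict CKY 2-form `ω(u,v) = ⟪Tu, v⟫` on `g_{r,s}` is never
closed: its exterior derivative `dω(u,v,w) = −ω([u,v],w) + ω([u,w],v) − ω([v,w],u)`
is not identically zero; specifically `dω(x, z₂, ξ) = −6r/s ≠ 0`. -/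
theorem grs_cky_form_never_closed
    (r s : ℝ) (hr : 0 < r) (hs : 0 < s)
    (lb : V5 →ₗ[ℝ] V5 →ₗ[ℝ] V5)
    (hanti : ∀ u : V5, lb u u = 0)
    (hjac : ∀ u v w : V5, lb u (lb v w) + lb v (lb w u) + lb w (lb u v) = 0)
    (hb1 : lb (e 0) (e 3) = r • e 1 + ((s^2 - r^2)/s) • e 4)
    (hb2 : lb (e 0) (e 4) = r • e 2 - ((s^2 - r^2)/s) • e 3)
    (hb3 : lb (e 3) (e 4) = s • e 0)
    (hb4 : lb (e 0) (e 1) = 0) (hb5 : lb (e 0) (e 2) = 0)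
    (hb6 : lb (e 1) (e 2) = 0) (hb7 : lb (e 1) (e 3) = 0)
    (hb8 : lb (e 1) (e 4) = 0) (hb9 : lb (e 2) (e 3) = 0)
    (hb10 : lb (e 2) (e 4) = 0)
    -- the tensor of the strict CKY 2-form ω
    (T : V5 →ₗ[ℝ] V5)
    (hT0 : T (e 0) = 0)
    (hT1 : T (e 1) = (2*(s^2 + 2*r^2)/(r^2*s)) • e 2 + (2/r) • e 3)
    (hT2 : T (e 2) = -(2*(s^2 + 2*r^2)/(r^2*s)) • e 1 + (2/r) • e 4)
    (hT3 : T (e 3) = -(2/r) • e 1 + (4/s) • e 4)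
    (hT4 : T (e 4) = -(2/r) • e 2 - (4/s) • e 3) :
    (¬ ∀ u v w : V5,
      -⟪T (lb u v), w⟫ + ⟪T (lb u w), v⟫ - ⟪T (lb v w), u⟫ = 0) ∧
    (-⟪T (lb (e 3) (e 2)), e 0⟫ + ⟪T (lb (e 3) (e 0)), e 2⟫ - ⟪T (lb (e 2) (e 0)), e 3⟫
      = -6 * r / s) ∧
    (-6 * r / s : ℝ) ≠ 0 :=
  grs_cky_form_never_closed_general r s hr hs lb hanti hb1 hb5 hb9 T hT1 hT4
end

section
/- Let h = ℝ × e(2) be the 4-dimensional Lie algebra with basis {e₁, f₁, e₂, f₂} and brackets [e₁,e₂] = −f₂, [e₁,f₂] = e₂, with inner product t·Id (t > 0) in this basis. Let S be the skew-symmetric endomorphism Se₁ = a₁ f₁, Se₂ = a₂ f₂ (a₁, a₂ ≠ 0). Then the central extension g = h ⊕_μ ℝξ with μ(x,y) = −2⟨S⁻¹x, y⟩, i.e., with brackets [e₁,e₂] = −f₂, [e₁,f₂] = e₂, [e₁,f₁] = 2t a₁⁻¹ ξ, [e₂,f₂] = 2t a₂⁻¹ ξ, and inner product extending ⟨·,·⟩_t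 with ‖ξ‖ = 1, ξ ⊥ h, admits the strict CKY tensor T with T|_h = S, Tξ = 0; in particular T satisfies the CKY equation with θ the dual of ξ. -/
/-!
All four claims are multilinear, so it suffices to check them on the basis `b`, where Koszul's
formula and the bracket table make each instance a finite computation. Conceptually: `S` is
parallel on `ℝ × e(2)`, so for `x, y` there `(∇_x T) y = ½ μ(x, S y) ξ = ⟪x, y⟫ ξ` because
`μ = −2⟪S⁻¹ ·, ·⟫` (concretely `aᵢ μ(eᵢ, fᵢ) = 2t`); and `∇_x ξ = ∇_ξ x = S⁻¹ x` gives
`(∇_x T) ξ = -x` and `(∇_ξ T) x = 0`, the remaining instances of the CKY equation.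
-/

open scoped RealInnerProductSpace

namespace LinearMap

variable {ι R M N : Type*} [CommSemiring R] [AddCommMonoid M] [Module R M]
  [AddCommMonoid N] [Module R N]

theorem ext_basis₃ (b : Module.Basis ι R M) {f g : M →ₗ[R] M →ₗ[R] M →ₗ[R] N}
    (h : ∀ i j k, f (b i) (b j) (b k) = g (b i) (b j) (b k)) : f = g :=
  b.ext fun i => ext_basis b b (h i)

def jacobiator (B : M →ₗ[R] M →ₗ[R] M) : M →ₗ[R] M →ₗ[R] M →ₗ[R] M :=
  mk₂ R (fun u v => B u ∘ₗ B v + B v ∘ₗ B.flip u + B.flip (B u v))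
    (by intros; ext; simp; abel) (by intros; ext; simp)
    (by intros; ext; simp; abel) (by intros; ext; simp)

@[simp]
theorem jacobiator_apply (B : M →ₗ[R] M →ₗ[R] M) (u v w : M) :
    B.jacobiator u v w = B u (B v w) + B v (B w u) + B w (B u v) := rfl

theorem jacobi_of_basis (b : Module.Basis ι R M) {B : M →ₗ[R] M →ₗ[R] M}
    (h : ∀ i j k,
      B (b i) (B (b j) (b k)) + B (b j) (B (b k) (b i)) + B (b k) (B (b i) (b j)) = 0)
    (u v w : M) : B u (B v w) + B v (B w u) + B w (B u v) = 0 := by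
  have hJ : B.jacobiator = 0 := ext_basis₃ b (by simpa using h)
  simpa using congr($hJ u v w)

end LinearMap

section InnerProductSpace

variable {ι V : Type*} [NormedAddCommGroup V] [InnerProductSpace ℝ V]

theorem inner_map_skew_of_basis (b : Module.Basis ι ℝ V) {T : V →ₗ[ℝ] V}
    (h : ∀ i j, ⟪T (b i), b j⟫ = -⟪b i, T (b j)⟫) (u v : V) : ⟪T u, v⟫ = -⟪u, T v⟫ := by
  have hB : (innerₗ V).comp T = -(innerₗ V).compl₂ T := LinearMap.ext_basis b b (by simpa using h)
  simpa using congr($hB u v)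

def covDeriv (D : V →ₗ[ℝ] V →ₗ[ℝ] V) (T : V →ₗ[ℝ] V) : V →ₗ[ℝ] V →ₗ[ℝ] V :=
  D.compl₂ T - D.compr₂ T

theorem covDeriv_apply (D : V →ₗ[ℝ] V →ₗ[ℝ] V) (T : V →ₗ[ℝ] V) (u v : V) :
    covDeriv D T u v = D u (T v) - T (D u v) := rfl

theorem inner_covDeriv_of_skew {D : V →ₗ[ℝ] V →ₗ[ℝ] V} {T : V →ₗ[ℝ] V}
    (hT : ∀ u v, ⟪T u, v⟫ = -⟪u, T v⟫) (u v w : V) :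
    ⟪covDeriv D T u v, w⟫ = ⟪D u (T v), w⟫ + ⟪D u v, T w⟫ := by
  rw [covDeriv_apply, inner_sub_left, hT, sub_neg_eq_add]

noncomputable def symmCovDerivForm (D : V →ₗ[ℝ] V →ₗ[ℝ] V) (T : V →ₗ[ℝ] V) :
    V →ₗ[ℝ] V →ₗ[ℝ] V →ₗ[ℝ] ℝ :=
  (covDeriv D T + (covDeriv D T).flip).compr₂ (innerₗ V)

theorem symmCovDerivForm_apply (D : V →ₗ[ℝ] V →ₗ[ℝ] V) (T : V →ₗ[ℝ] V) (u v w : V) :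
    symmCovDerivForm D T u v w = ⟪covDeriv D T u v, w⟫ + ⟪covDeriv D T v u, w⟫ := by
  simp [symmCovDerivForm]

noncomputable def ckyForm (ξ : V) : V →ₗ[ℝ] V →ₗ[ℝ] V →ₗ[ℝ] ℝ :=
  LinearMap.mk₂ ℝ
    (fun u v => (2 * ⟪u, v⟫) • innerₗ V ξ - ⟪ξ, u⟫ • innerₗ V v - ⟪ξ, v⟫ • innerₗ V u)
    (by intros; ext; simp [inner_add_left, inner_add_right]; ring)
    (by intros; ext; simp [real_inner_smul_left, real_inner_smul_right]; ring)
    (by intros; ext; simp [inner_add_right]; ring)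
    (by intros; ext; simp [real_inner_smul_right]; ring)

theorem ckyForm_apply (ξ u v w : V) :
    ckyForm ξ u v w = 2 * ⟪u, v⟫ * ⟪ξ, w⟫ - ⟪ξ, u⟫ * ⟪v, w⟫ - ⟪ξ, v⟫ * ⟪u, w⟫ := by
  simp [ckyForm]

theorem cky_of_basis (b : Module.Basis ι ℝ V) {D : V →ₗ[ℝ] V →ₗ[ℝ] V} {T : V →ₗ[ℝ] V} {ξ : V}
    (h : ∀ i j k, ⟪covDeriv D T (b i) (b j), b k⟫ + ⟪covDeriv D T (b j) (b i), b k⟫ =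
      2 * ⟪b i, b j⟫ * ⟪ξ, b k⟫ - ⟪b j, b k⟫ * ⟪ξ, b i⟫ - ⟪b i, b k⟫ * ⟪ξ, b j⟫)
    (u v w : V) :
    ⟪covDeriv D T u v, w⟫ + ⟪covDeriv D T v u, w⟫ =
      2 * ⟪u, v⟫ * ⟪ξ, w⟫ - ⟪v, w⟫ * ⟪ξ, u⟫ - ⟪u, w⟫ * ⟪ξ, v⟫ := by
  have hform : symmCovDerivForm D T = ckyForm ξ := LinearMap.ext_basis₃ b fun i j k => by
    rw [symmCovDerivForm_apply, ckyForm_apply]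
    linear_combination h i j k
  have huvw := congr($hform u v w)
  rw [symmCovDerivForm_apply, ckyForm_apply] at huvw
  linear_combination huvw

/-- The brackets of `(ℝ × e(2)) ⊕_μ ℝξ` in the basis `(e₁, f₁, e₂, f₂, ξ) = (b 0, …, b 4)`,
with `sᵢ = μ(eᵢ, fᵢ)`. -/
def centralExtBracket (b : Fin 5 → V) (s₁ s₂ : ℝ) : Fin 5 → Fin 5 → V :=
  ![![0, s₁ • b 4, -b 3, b 2, 0],
    ![-(s₁ • b 4), 0, 0, 0, 0],
    ![b 3, 0, 0, s₂ • b 4, 0],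
    ![-b 2, 0, -(s₂ • b 4), 0, 0],
    ![0, 0, 0, 0, 0]]

variable {b : Fin 5 → V} {s₁ s₂ t a₁ a₂ : ℝ} {lb : V →ₗ[ℝ] V →ₗ[ℝ] V} {T : V →ₗ[ℝ] V}

theorem apply_basis_eq_centralExtBracket (hanti : lb.IsAlt)
    (hb1 : lb (b 0) (b 2) = -(b 3)) (hb2 : lb (b 0) (b 3) = b 2)
    (hb3 : lb (b 0) (b 1) = s₁ • b 4) (hb4 : lb (b 2) (b 3) = s₂ • b 4)
    (hb5 : lb (b 1) (b 2) = 0) (hb6 : lb (b 1) (b 3) = 0)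
    (hb7 : lb (b 0) (b 4) = 0) (hb8 : lb (b 1) (b 4) = 0)
    (hb9 : lb (b 2) (b 4) = 0) (hb10 : lb (b 3) (b 4) = 0) (i j : Fin 5) :
    lb (b i) (b j) = centralExtBracket b s₁ s₂ i j := by
  have hswap (x y : V) : lb y x = -lb x y := (hanti.neg x y).symm
  fin_cases i <;> fin_cases j <;>
    first
    | (simp [centralExtBracket, hanti.self_eq_zero, hb1, hb2, hb3, hb4, hb5, hb6, hb7, hb8, hb9,
        hb10]; done)
    | (rw [hswap]; simp [centralExtBracket, hb1, hb2, hb3, hb4, hb5, hb6, hb7, hb8, hb9, hb10])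

theorem jacobi_centralExtBracket_basis
    (hlb : ∀ i j, lb (b i) (b j) = centralExtBracket b s₁ s₂ i j) (i j k : Fin 5) :
    lb (b i) (lb (b j) (b k)) + lb (b j) (lb (b k) (b i)) + lb (b k) (lb (b i) (b j)) = 0 := by
  fin_cases i <;> fin_cases j <;> fin_cases k <;> simp [hlb, centralExtBracket]

theorem inner_map_skew_centralExt_basis
    (hmetric : ∀ i j : Fin 5, ⟪b i, b j⟫ = if i = j then (if i = 4 then 1 else t) else 0)
    (hT : ∀ i, T (b i) = ![a₁ • b 1, -a₁ • b 0, a₂ • b 3, -a₂ • b 2, 0] i) (i j : Fin 5) :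
    ⟪T (b i), b j⟫ = -⟪b i, T (b j)⟫ := by
  fin_cases i <;> fin_cases j <;>
    simp only [Fin.reduceFinMk, hT, Matrix.cons_val, neg_smul, real_inner_smul_left,
      real_inner_smul_right, inner_neg_left, inner_neg_right, inner_zero_left, inner_zero_right,
      hmetric, Fin.reduceEq, ↓reduceIte] <;> ring

theorem cky_centralExt_basis
    (hmetric : ∀ i j : Fin 5, ⟪b i, b j⟫ = if i = j then (if i = 4 then 1 else t) else 0)
    (hlb : ∀ i j, lb (b i) (b j) = centralExtBracket b s₁ s₂ i j) {D : V →ₗ[ℝ] V →ₗ[ℝ] V}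
    (hD : ∀ u v w : V, 2 * ⟪D u v, w⟫ = ⟪lb u v, w⟫ - ⟪lb v w, u⟫ + ⟪lb w u, v⟫)
    (hT : ∀ i, T (b i) = ![a₁ • b 1, -a₁ • b 0, a₂ • b 3, -a₂ • b 2, 0] i)
    (hskew : ∀ u v, ⟪T u, v⟫ = -⟪u, T v⟫)
    (h₁ : a₁ * s₁ = 2 * t) (h₂ : a₂ * s₂ = 2 * t) (i j k : Fin 5) :
    ⟪covDeriv D T (b i) (b j), b k⟫ + ⟪covDeriv D T (b j) (b i), b k⟫ =
      2 * ⟪b i, b j⟫ * ⟪b 4, b k⟫ - ⟪b j, b k⟫ * ⟪b 4, b i⟫ - ⟪b i, b k⟫ * ⟪b 4, b j⟫ := by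
  have koszul (u v w : V) : ⟪D u v, w⟫ = (⟪lb u v, w⟫ - ⟪lb v w, u⟫ + ⟪lb w u, v⟫) / 2 := by
    linarith [hD u v w]
  simp only [inner_covDeriv_of_skew hskew, koszul]
  fin_cases i <;> fin_cases j <;> fin_cases k <;>
    simp only [Fin.reduceFinMk, hT, hlb, centralExtBracket, Matrix.cons_val, map_smul, map_neg,
      map_zero, neg_smul, LinearMap.smul_apply, LinearMap.neg_apply, LinearMap.zero_apply,
      real_inner_smul_left, real_inner_smul_right, inner_neg_left, inner_neg_right,
      inner_zero_left, inner_zero_right, hmetric, Fin.reduceEq, ↓reduceIte] <;>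
    ring_nf <;> linarith

end InnerProductSpace

theorem central_extension_R_e2_strict_cky_general
    {V : Type*} [NormedAddCommGroup V] [InnerProductSpace ℝ V]
    (t a₁ a₂ : ℝ) (ha₁ : a₁ ≠ 0) (ha₂ : a₂ ≠ 0)
    (b : Module.Basis (Fin 5) ℝ V)
    (hmetric : ∀ i j : Fin 5,
      ⟪b i, b j⟫ = if i = j then (if i = 4 then 1 else t) else 0)
    (lb : V →ₗ[ℝ] V →ₗ[ℝ] V)
    (hanti : ∀ u : V, lb u u = 0)
    (hb1 : lb (b 0) (b 2) = -(b 3))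
    (hb2 : lb (b 0) (b 3) = b 2)
    (hb3 : lb (b 0) (b 1) = (2*t/a₁) • b 4)
    (hb4 : lb (b 2) (b 3) = (2*t/a₂) • b 4)
    (hb5 : lb (b 1) (b 2) = 0) (hb6 : lb (b 1) (b 3) = 0)
    (hb7 : lb (b 0) (b 4) = 0) (hb8 : lb (b 1) (b 4) = 0)
    (hb9 : lb (b 2) (b 4) = 0) (hb10 : lb (b 3) (b 4) = 0)
    (D : V →ₗ[ℝ] V →ₗ[ℝ] V)
    (hD : ∀ u v w : V, 2 * ⟪D u v, w⟫ = ⟪lb u v, w⟫ - ⟪lb v w, u⟫ + ⟪lb w u, v⟫)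
    (T : V →ₗ[ℝ] V)
    (hT0 : T (b 0) = a₁ • b 1) (hT1 : T (b 1) = -a₁ • b 0)
    (hT2 : T (b 2) = a₂ • b 3) (hT3 : T (b 3) = -a₂ • b 2)
    (hT4 : T (b 4) = 0) :
    (∀ u v w : V, lb u (lb v w) + lb v (lb w u) + lb w (lb u v) = 0) ∧
    (∀ u v : V, ⟪T u, v⟫ = -⟪u, T v⟫) ∧
    (b 4 : V) ≠ 0 ∧
    (∀ u v w : V,
      ⟪D u (T v) - T (D u v), w⟫ + ⟪D v (T u) - T (D v u), w⟫
        = 2 * ⟪u, v⟫ * ⟪b 4, w⟫ - ⟪v, w⟫ * ⟪b 4, u⟫ - ⟪u, w⟫ * ⟪b 4, v⟫) := by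
  have hlb := apply_basis_eq_centralExtBracket hanti hb1 hb2 hb3 hb4 hb5 hb6 hb7 hb8 hb9 hb10
  have hT : ∀ i, T (b i) = ![a₁ • b 1, -a₁ • b 0, a₂ • b 3, -a₂ • b 2, 0] i := by
    intro i
    fin_cases i <;> assumption
  have hskew := inner_map_skew_of_basis b (inner_map_skew_centralExt_basis hmetric hT)
  have hcky := cky_centralExt_basis hmetric hlb hD hT hskew
    (mul_div_cancel₀ _ ha₁) (mul_div_cancel₀ _ ha₂)
  exact ⟨LinearMap.jacobi_of_basis b (jacobi_centralExtBracket_basis hlb), hskew, b.ne_zero 4,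
    cky_of_basis b hcky⟩

/-- the central extension `g = (ℝ × e(2)) ⊕_μ ℝξ` (Example: basis
`{e₁, f₁, e₂, f₂, ξ} = {b 0, b 1, b 2, b 3, b 4}`, metric `diag(t,t,t,t,1)`,
brackets `[e₁,e₂] = −f₂`, `[e₁,f₂] = e₂`, `[e₁,f₁] = 2t a₁⁻¹ ξ`,
`[e₂,f₂] = 2t a₂⁻¹ ξ`) carries the strict CKY tensor `T` with `T e₁ = a₁ f₁`,
`T e₂ = a₂ f₂` (hence `T f₁ = −a₁ e₁`, `T f₂ = −a₂ e₂`), `T ξ = 0`, and 1-form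
`θ = ⟪ξ, ·⟫`; moreover the brackets satisfy the Jacobi identity. -/
theorem central_extension_R_e2_strict_cky
    {V : Type*} [NormedAddCommGroup V] [InnerProductSpace ℝ V] [FiniteDimensional ℝ V]
    (t a₁ a₂ : ℝ) (ht : 0 < t) (ha₁ : a₁ ≠ 0) (ha₂ : a₂ ≠ 0)
    (b : Module.Basis (Fin 5) ℝ V)
    (hmetric : ∀ i j : Fin 5,
      ⟪b i, b j⟫ = if i = j then (if i = 4 then 1 else t) else 0)
    (lb : V →ₗ[ℝ] V →ₗ[ℝ] V)
    (hanti : ∀ u : V, lb u u = 0)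
    (hb1 : lb (b 0) (b 2) = -(b 3))
    (hb2 : lb (b 0) (b 3) = b 2)
    (hb3 : lb (b 0) (b 1) = (2*t/a₁) • b 4)
    (hb4 : lb (b 2) (b 3) = (2*t/a₂) • b 4)
    (hb5 : lb (b 1) (b 2) = 0) (hb6 : lb (b 1) (b 3) = 0)
    (hb7 : lb (b 0) (b 4) = 0) (hb8 : lb (b 1) (b 4) = 0)
    (hb9 : lb (b 2) (b 4) = 0) (hb10 : lb (b 3) (b 4) = 0)
    (D : V →ₗ[ℝ] V →ₗ[ℝ] V)
    (hD : ∀ u v w : V, 2 * ⟪D u v, w⟫ = ⟪lb u v, w⟫ - ⟪lb v w, u⟫ + ⟪lb w u, v⟫)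
    (T : V →ₗ[ℝ] V)
    (hT0 : T (b 0) = a₁ • b 1) (hT1 : T (b 1) = -a₁ • b 0)
    (hT2 : T (b 2) = a₂ • b 3) (hT3 : T (b 3) = -a₂ • b 2)
    (hT4 : T (b 4) = 0) :
    (∀ u v w : V, lb u (lb v w) + lb v (lb w u) + lb w (lb u v) = 0) ∧
    (∀ u v : V, ⟪T u, v⟫ = -⟪u, T v⟫) ∧
    (b 4 : V) ≠ 0 ∧
    (∀ u v w : V,
      ⟪D u (T v) - T (D u v), w⟫ + ⟪D v (T u) - T (D v u), w⟫
        = 2 * ⟪u, v⟫ * ⟪b 4, w⟫ - ⟪v, w⟫ * ⟪b 4, u⟫ - ⟪u, w⟫ * ⟪b 4, v⟫) :=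
  central_extension_R_e2_strict_cky_general t a₁ a₂ ha₁ ha₂ b hmetric lb hanti hb1 hb2 hb3 hb4 hb5
    hb6 hb7 hb8 hb9 hb10 D hD T hT0 hT1 hT2 hT3 hT4
end
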